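/- arXiv:2411.03216 — 15 statements merged into one kernel-verified Lean document; each statement's English description precedes it below -/
import Mathlib

section
/- Let m ≥ 1 and a = (a_1,…,a_m) ∈ ℝ^m. The partition problem for a is solvable if and only if there exist u, v ∈ ℝ^m with u_i + v_i = 1 for all i ∈ [m], Σ_{i=1}^m a_i (u_i − v_i) = 0, u ≥ 0, v ≥ 0, and Σ_{i=1}^m (u_i^2 + v_i^2) = m (equivalently, the optimization problem min Σ_{i=1}^m (−u_i^2 − v_i^2) subject to these constraints has optimal value −m). -/
/-- The partition problem for `a` is solvable iff there exist `u, v` with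
`uᵢ + vᵢ = 1`, `∑ aᵢ(uᵢ - vᵢ) = 0`, `u ≥ 0`, `v ≥ 0` and `∑ (uᵢ² + vᵢ²) = m`. -/
theorem partition_iff_constrained_quadratic (m : ℕ) (hm : 1 ≤ m) (a : Fin m → ℝ) :
    (∃ ε : Fin m → ℝ, (∀ i, ε i = 1 ∨ ε i = -1) ∧ ∑ i, ε i * a i = 0) ↔
    (∃ u v : Fin m → ℝ,
      (∀ i, u i + v i = 1) ∧
      (∑ i, a i * (u i - v i)) = 0 ∧
      (∀ i, 0 ≤ u i) ∧ (∀ i, 0 ≤ v i) ∧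
      (∑ i, (u i ^ 2 + v i ^ 2)) = (m : ℝ)) := by
  constructor
  · rintro ⟨ε, hε, hsum⟩
    refine ⟨fun i => (1 + ε i) / 2, fun i => (1 - ε i) / 2, fun i => by ring, ?_, ?_, ?_, ?_⟩
    · have : ∑ i, a i * ((1 + ε i) / 2 - (1 - ε i) / 2) = ∑ i, ε i * a i := by
        apply Finset.sum_congr rfl; intro i _; ring
      rw [this, hsum]
    · intro i; rcases hε i with h | h <;> simp only [h] <;> norm_num
    · intro i; rcases hε i with h | h <;> simp only [h] <;> norm_num
    · have : ∀ i : Fin m, ((1 + ε i) / 2) ^ 2 + ((1 - ε i) / 2) ^ 2 = 1 := by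
        intro i; rcases hε i with h | h <;> rw [h] <;> norm_num
      rw [Finset.sum_congr rfl fun i _ => this i, Finset.sum_const]
      simp
  · rintro ⟨u, v, huv, hsum, hu, hv, hq⟩
    have key : ∀ i : Fin m, u i ^ 2 + v i ^ 2 ≤ 1 := by
      intro i
      have h := huv i
      nlinarith [mul_nonneg (hu i) (hv i)]
    have heq : ∀ i ∈ Finset.univ, u i ^ 2 + v i ^ 2 = 1 := by
      by_contra hc
      push_neg at hc
      obtain ⟨j, _, hj⟩ := hc
      have hlt : u j ^ 2 + v j ^ 2 < 1 := lt_of_le_of_ne (key j) hj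
      have : ∑ i, (u i ^ 2 + v i ^ 2) < ∑ i : Fin m, (1 : ℝ) := by
        apply Finset.sum_lt_sum (fun i _ => key i) ⟨j, Finset.mem_univ j, hlt⟩
      simp at this
      rw [hq] at this
      exact lt_irrefl _ this
    refine ⟨fun i => u i - v i, ?_, ?_⟩
    · intro i
      have h1 := huv i
      have h2 := heq i (Finset.mem_univ i)
      have huvz : u i * v i = 0 := by nlinarith
      rcases mul_eq_zero.1 huvz with h | h
      · right; simp only; rw [h] at h1 ⊢; linarith
      · left; simp only; rw [h] at h1 ⊢; linarith
    · rw [← hsum]; apply Finset.sum_congr rfl; intro i _; ring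
end

section
/- Let m ≥ 1 and τ ∈ [1/√2, √2). For all u, v ∈ ℝ^m with u_i + v_i = 1 for every i ∈ [m], one has Σ_{i=1}^m (|u_i| + |v_i|) − τ·√(Σ_{i=1}^m (u_i^2 + v_i^2)) ≥ m − τ√m, and equality holds if and only if (u_i, v_i) = (1, 0) or (u_i, v_i) = (0, 1) for every i ∈ [m]. In particular, the set of minimizers of the left-hand side over {(u,v) : u_i+v_i=1 for all i} is exactly X*. -/
/-- Pointwise lemma: if `u + v = 1` then `|u|+|v| ≥ 1 + √2 (√(max (u²+v²) 1) − 1)`,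
strictly when `u²+v² > 1`. -/
lemma L1L2_pointwise (u v : ℝ) (h : u + v = 1) :
    1 + Real.sqrt 2 * (Real.sqrt (max (u ^ 2 + v ^ 2) 1) - 1) ≤ |u| + |v| ∧
    (1 < u ^ 2 + v ^ 2 →
      1 + Real.sqrt 2 * (Real.sqrt (max (u ^ 2 + v ^ 2) 1) - 1) < |u| + |v|) := by
  have ha1 : 1 ≤ |u| + |v| := by
    calc (1:ℝ) = |u + v| := by rw [h]; simp
    _ ≤ |u| + |v| := abs_add_le _ _
  rcases le_or_gt (u ^ 2 + v ^ 2) 1 with hq | hq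
  · rw [max_eq_right hq, Real.sqrt_one]
    constructor
    · simpa using ha1
    · intro h1; linarith
  · rw [max_eq_left hq.le]
    have hq0 : (0:ℝ) ≤ u ^ 2 + v ^ 2 := by positivity
    set t := Real.sqrt (u ^ 2 + v ^ 2) with ht
    have ht2 : t ^ 2 = u ^ 2 + v ^ 2 := Real.sq_sqrt hq0
    have ht1 : 1 < t := by rw [show (1:ℝ) = Real.sqrt 1 by simp]; exact Real.sqrt_lt_sqrt (by norm_num) hq
    have hw2 : Real.sqrt 2 ^ 2 = 2 := Real.sq_sqrt (by norm_num)
    have hw1 : 1 ≤ Real.sqrt 2 := Real.one_le_sqrt.2 (by norm_num)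
    have hwlt : Real.sqrt 2 < 2 := by
      nlinarith [hw2, Real.sqrt_nonneg 2]
    have huv : u * v = (1 - (u ^ 2 + v ^ 2)) / 2 := by nlinarith [h]
    have habs : |u * v| = ((u ^ 2 + v ^ 2) - 1) / 2 := by
      rw [huv, abs_div, abs_of_neg (by linarith : (1 - (u^2+v^2)) < 0)]
      norm_num
    have hasq : (|u| + |v|) ^ 2 = 2 * (u ^ 2 + v ^ 2) - 1 := by
      have : (|u| + |v|) ^ 2 = u ^ 2 + v ^ 2 + 2 * |u * v| := by
        rw [abs_mul]; rw [add_sq, sq_abs, sq_abs]; ring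
      rw [this, habs]; ring
    have key : 1 + Real.sqrt 2 * (t - 1) < |u| + |v| := by
      nlinarith [hasq, ht2, ha1, ht1, hw2, hwlt, hw1,
        mul_pos (sub_pos.2 ht1) (sub_pos.2 hwlt),
        mul_nonneg (Real.sqrt_nonneg 2) (le_of_lt (sub_pos.2 ht1))]
    exact ⟨key.le, fun _ => key⟩

/-- For `τ ∈ [1/√2, √2)` and `uᵢ + vᵢ = 1` for all `i`, we have
`∑ (|uᵢ| + |vᵢ|) − τ √(∑ (uᵢ² + vᵢ²)) ≥ m − τ√m`, with equality iff
`(uᵢ, vᵢ) = (1,0)` or `(0,1)` for every `i` (i.e., the set of minimizers is `X*`). -/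
theorem L1_sub_tauL2_lower_bound (m : ℕ) (hm : 1 ≤ m) (τ : ℝ)
    (hτ1 : 1 / Real.sqrt 2 ≤ τ) (hτ2 : τ < Real.sqrt 2)
    (u v : Fin m → ℝ) (hsum : ∀ i, u i + v i = 1) :
    (m : ℝ) - τ * Real.sqrt m ≤
      (∑ i, (|u i| + |v i|)) - τ * Real.sqrt (∑ i, (u i ^ 2 + v i ^ 2)) ∧
    ((∑ i, (|u i| + |v i|)) - τ * Real.sqrt (∑ i, (u i ^ 2 + v i ^ 2))
        = (m : ℝ) - τ * Real.sqrt m ↔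
      ∀ i, (u i = 1 ∧ v i = 0) ∨ (u i = 0 ∧ v i = 1)) := by
  have hw0 : (0:ℝ) < Real.sqrt 2 := Real.sqrt_pos.2 (by norm_num)
  have hτ0 : 0 < τ := lt_of_lt_of_le (by positivity) hτ1
  have hm1 : (1:ℝ) ≤ (m:ℝ) := by exact_mod_cast hm
  have hsm1 : (1:ℝ) ≤ Real.sqrt m := Real.one_le_sqrt.2 hm1
  have hsm2 : Real.sqrt m ^ 2 = (m:ℝ) := Real.sq_sqrt (by linarith)
  set x : Fin m → ℝ := fun i => Real.sqrt (max (u i ^ 2 + v i ^ 2) 1) with hxdef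
  have hx1 : ∀ i, 1 ≤ x i := fun i => Real.one_le_sqrt.2 (le_max_right _ _)
  have hxsq : ∀ i, x i ^ 2 = max (u i ^ 2 + v i ^ 2) 1 := fun i =>
    Real.sq_sqrt (le_trans zero_le_one (le_max_right _ _))
  set X := ∑ i, x i with hXdef
  have hXm : (m:ℝ) ≤ X := by
    calc (m:ℝ) = ∑ _i : Fin m, (1:ℝ) := by simp
    _ ≤ X := Finset.sum_le_sum fun i _ => hx1 i
  set T := Real.sqrt (∑ i, max (u i ^ 2 + v i ^ 2) 1) with hTdef
  have hT0 : 0 ≤ T := Real.sqrt_nonneg _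
  -- ineq3 : T ≤ (X - m) + √m
  have ineq3 : T ≤ (X - m) + Real.sqrt m := by
    have hsq : ∑ i, (x i - 1) ^ 2 ≤ (∑ i, (x i - 1)) ^ 2 :=
      Finset.sum_sq_le_sq_sum_of_nonneg fun i _ => by linarith [hx1 i]
    have hXsub : ∑ i, (x i - 1) = X - m := by
      rw [Finset.sum_sub_distrib]; simp [hXdef]
    have hexp : ∑ i, (x i - 1) ^ 2 = (∑ i, x i ^ 2) - 2 * X + m := by
      have : ∀ i : Fin m, (x i - 1) ^ 2 = x i ^ 2 - 2 * x i + 1 := fun i => by ring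
      simp only [this, Finset.sum_add_distrib, Finset.sum_sub_distrib]
      simp [hXdef, Finset.mul_sum]
    have hsum_r : ∑ i, max (u i ^ 2 + v i ^ 2) 1 = ∑ i, x i ^ 2 := by
      exact Finset.sum_congr rfl fun i _ => (hxsq i).symm
    have hbound : ∑ i, max (u i ^ 2 + v i ^ 2) 1 ≤ ((X - m) + Real.sqrt m) ^ 2 := by
      rw [hsum_r]
      nlinarith [hsq, hXsub, hexp, hXm, hsm1, hsm2]
    calc T ≤ Real.sqrt (((X - m) + Real.sqrt m) ^ 2) := Real.sqrt_le_sqrt hbound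
    _ = (X - m) + Real.sqrt m := Real.sqrt_sq (by linarith)
  -- ineq1 : √(∑ q) ≤ T
  have ineq1 : Real.sqrt (∑ i, (u i ^ 2 + v i ^ 2)) ≤ T :=
    Real.sqrt_le_sqrt (Finset.sum_le_sum fun i _ => le_max_left _ _)
  -- ineq2 : m + √2 (X - m) ≤ ∑ (|uᵢ|+|vᵢ|)
  have hpt : ∀ i, 1 + Real.sqrt 2 * (x i - 1) ≤ |u i| + |v i| := fun i =>
    (L1L2_pointwise (u i) (v i) (hsum i)).1
  have ineq2 : (m:ℝ) + Real.sqrt 2 * (X - m) ≤ ∑ i, (|u i| + |v i|) := by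
    have : ∑ i, (1 + Real.sqrt 2 * (x i - 1)) ≤ ∑ i, (|u i| + |v i|) :=
      Finset.sum_le_sum fun i _ => hpt i
    have hcalc : ∑ i, (1 + Real.sqrt 2 * (x i - 1)) = (m:ℝ) + Real.sqrt 2 * (X - m) := by
      simp only [Finset.sum_add_distrib, ← Finset.mul_sum, Finset.sum_sub_distrib]
      simp only [Finset.sum_const, Finset.card_univ, Fintype.card_fin, nsmul_eq_mul, mul_one,
        ← hXdef]
      try ring
    linarith [hcalc ▸ this]
  have e1 : τ * Real.sqrt (∑ i, (u i ^ 2 + v i ^ 2)) ≤ τ * T :=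
    mul_le_mul_of_nonneg_left ineq1 hτ0.le
  have e2 : τ * T ≤ τ * ((X - m) + Real.sqrt m) :=
    mul_le_mul_of_nonneg_left ineq3 hτ0.le
  have e3 : τ * (X - m) ≤ Real.sqrt 2 * (X - m) :=
    mul_le_mul_of_nonneg_right hτ2.le (by linarith)
  have e2' : τ * T ≤ τ * (X - m) + τ * Real.sqrt m := by rw [← mul_add]; exact e2
  have main : (m : ℝ) - τ * Real.sqrt m ≤
      (∑ i, (|u i| + |v i|)) - τ * Real.sqrt (∑ i, (u i ^ 2 + v i ^ 2)) := by
    linarith [ineq2, e1, e2', e3]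
  refine ⟨main, ?_, ?_⟩
  · -- equality implies all coordinates are (1,0) or (0,1)
    intro heq
    -- all slacks are zero
    have s2 : τ * T = τ * Real.sqrt (∑ i, (u i ^ 2 + v i ^ 2)) := by
      linarith [ineq2, e1, e2', e3]
    have s1 : ∑ i, (|u i| + |v i|) = (m:ℝ) + Real.sqrt 2 * (X - m) := by
      linarith [ineq2, e1, e2', e3]
    -- pointwise equality in ineq2
    have hpteq : ∀ i, 1 + Real.sqrt 2 * (x i - 1) = |u i| + |v i| := by
      have hs : ∑ i, (1 + Real.sqrt 2 * (x i - 1)) = ∑ i, (|u i| + |v i|) := by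
        have hcalc : ∑ i, (1 + Real.sqrt 2 * (x i - 1)) = (m:ℝ) + Real.sqrt 2 * (X - m) := by
          simp only [Finset.sum_add_distrib, ← Finset.mul_sum, Finset.sum_sub_distrib]
          simp only [Finset.sum_const, Finset.card_univ, Fintype.card_fin, nsmul_eq_mul, mul_one,
            ← hXdef]
          try ring
        rw [hcalc, s1]
      intro i
      exact (Finset.sum_eq_sum_iff_of_le (fun i _ => hpt i)).1 hs i (Finset.mem_univ i)
    -- hence each qᵢ ≤ 1
    have hqle : ∀ i, u i ^ 2 + v i ^ 2 ≤ 1 := by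
      intro i
      by_contra hgt
      push_neg at hgt
      exact absurd (hpteq i) (ne_of_lt ((L1L2_pointwise (u i) (v i) (hsum i)).2 hgt))
    -- ∑ qᵢ = m
    have hTm : T = Real.sqrt m := by
      have : ∑ i, max (u i ^ 2 + v i ^ 2) 1 = (m:ℝ) := by
        calc ∑ i, max (u i ^ 2 + v i ^ 2) 1 = ∑ _i : Fin m, (1:ℝ) :=
          Finset.sum_congr rfl fun i _ => max_eq_right (hqle i)
        _ = (m:ℝ) := by simp
      rw [hTdef, this]
    have hQm : ∑ i, (u i ^ 2 + v i ^ 2) = (m:ℝ) := by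
      have hs : Real.sqrt (∑ i, (u i ^ 2 + v i ^ 2)) = Real.sqrt m := by
        have := mul_left_cancel₀ hτ0.ne' s2
        rw [← this, hTm]
      have hQ0 : 0 ≤ ∑ i, (u i ^ 2 + v i ^ 2) := Finset.sum_nonneg fun i _ => by positivity
      have := congrArg (fun y => y ^ 2) hs
      simpa [Real.sq_sqrt hQ0, hsm2] using this
    have hq1 : ∀ i, u i ^ 2 + v i ^ 2 = 1 := by
      have hs : ∑ i, (u i ^ 2 + v i ^ 2) = ∑ _i : Fin m, (1:ℝ) := by
        rw [hQm]; simp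
      intro i
      exact ((Finset.sum_eq_sum_iff_of_le (fun i _ => hqle i)).1 hs i (Finset.mem_univ i))
    intro i
    have huv : u i * v i = 0 := by nlinarith [hsum i, hq1 i]
    rcases mul_eq_zero.1 huv with h0 | h0
    · right; exact ⟨h0, by linarith [hsum i, h0]⟩
    · left; exact ⟨by linarith [hsum i, h0], h0⟩
  · -- converse
    intro h
    have h1 : ∀ i : Fin m, |u i| + |v i| = (1:ℝ) := by
      intro i; rcases h i with ⟨ha, hb⟩ | ⟨ha, hb⟩ <;> rw [ha, hb] <;> norm_num
    have h2 : ∀ i : Fin m, u i ^ 2 + v i ^ 2 = (1:ℝ) := by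
      intro i; rcases h i with ⟨ha, hb⟩ | ⟨ha, hb⟩ <;> rw [ha, hb] <;> norm_num
    have hA : ∑ i, (|u i| + |v i|) = (m:ℝ) := by simp [h1]
    have hQ : ∑ i, (u i ^ 2 + v i ^ 2) = (m:ℝ) := by simp [h2]
    rw [hA, hQ]
end

section
/- Let m ≥ 1, 1 ≤ k ≤ m, and 0 < τ < √2. Define g : ℝ^k → ℝ by g(w) = 2·Σ_{i=1}^k w_i^2 − τ·√(m + 2·Σ_{i=1}^k w_i^2 + 2·Σ_{i=1}^k w_i^4). Then g(w) ≥ (2 − √2·τ)·‖w‖_2^2 − √2·τ·‖w‖_2 − √m·τ for all w ∈ ℝ^k, and consequently g is coercive: g(w) → +∞ as ‖w‖_2 → ∞. -/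
/-!
Since `∑ wᵢ⁴ ≤ (∑ wᵢ²)² = ‖w‖⁴`, the radicand is at most `m + 2‖w‖² + 2‖w‖⁴`, which is bounded by
`(√m + √2 ‖w‖ + √2 ‖w‖²)²`. Hence `g(w)` dominates a quadratic in `‖w‖` whose leading coefficient
`2 - √2 τ` is positive exactly when `τ < √2`, and such a quadratic tends to `+∞`.
-/

open Filter

theorem EuclideanSpace.sum_pow_four_le_norm_pow_four {ι : Type*} [Fintype ι]
    (w : EuclideanSpace ℝ ι) : ∑ i, w i ^ 4 ≤ ‖w‖ ^ 4 :=
  calc ∑ i, w i ^ 4 = ∑ i, (w i ^ 2) ^ 2 := by simp only [← pow_mul]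
    _ ≤ (∑ i, w i ^ 2) ^ 2 := Finset.sum_sq_le_sq_sum_of_nonneg fun i _ => sq_nonneg _
    _ = ‖w‖ ^ 4 := by rw [← EuclideanSpace.real_norm_sq_eq, ← pow_mul]

theorem EuclideanSpace.sqrt_add_sum_sq_add_sum_pow_four_le {ι : Type*} [Fintype ι]
    {c : ℝ} (hc : 0 ≤ c) (w : EuclideanSpace ℝ ι) :
    √(c + 2 * ∑ i, w i ^ 2 + 2 * ∑ i, w i ^ 4) ≤ √c + √2 * ‖w‖ + √2 * ‖w‖ ^ 2 := by
  have h4 := EuclideanSpace.sum_pow_four_le_norm_pow_four w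
  rw [← EuclideanSpace.real_norm_sq_eq, Real.sqrt_le_iff]
  refine ⟨by positivity, ?_⟩
  have hsc := Real.sq_sqrt hc
  have hs2 := Real.sq_sqrt (zero_le_two : (0 : ℝ) ≤ 2)
  have hcross : 0 ≤ √c * (√2 * ‖w‖ + √2 * ‖w‖ ^ 2) + √2 * ‖w‖ * (√2 * ‖w‖ ^ 2) := by positivity
  nlinarith

theorem EuclideanSpace.le_two_mul_sum_sq_sub_mul_sqrt {ι : Type*} [Fintype ι]
    {c τ : ℝ} (hc : 0 ≤ c) (hτ : 0 ≤ τ) (w : EuclideanSpace ℝ ι) :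
    (2 - √2 * τ) * ‖w‖ ^ 2 - √2 * τ * ‖w‖ - √c * τ
      ≤ 2 * ∑ i, w i ^ 2 - τ * √(c + 2 * ∑ i, w i ^ 2 + 2 * ∑ i, w i ^ 4) := by
  have h := mul_le_mul_of_nonneg_left (sqrt_add_sum_sq_add_sum_pow_four_le hc w) hτ
  rw [← EuclideanSpace.real_norm_sq_eq] at h ⊢
  linarith

theorem tendsto_quadratic_atTop {a : ℝ} (ha : 0 < a) (b c : ℝ) :
    Tendsto (fun x : ℝ => a * x ^ 2 - b * x - c) atTop atTop := by
  have hlin : Tendsto (fun x : ℝ => a * x - b) atTop atTop :=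
    tendsto_atTop_add_const_right _ _ (tendsto_id.const_mul_atTop ha)
  refine (tendsto_atTop_add_const_right _ (-c) (tendsto_id.atTop_mul_atTop₀ hlin)).congr
    fun x => ?_
  simp only [id]
  ring

theorem g_lower_bound_and_coercive_general (m k : ℕ)
    (τ : ℝ) (hτ0 : 0 < τ) (hτ2 : τ < Real.sqrt 2)
    (g : EuclideanSpace ℝ (Fin k) → ℝ)
    (hg : ∀ w, g w = 2 * ∑ i, w i ^ 2
      - τ * Real.sqrt ((m : ℝ) + 2 * ∑ i, w i ^ 2 + 2 * ∑ i, w i ^ 4)) :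
    (∀ w, (2 - Real.sqrt 2 * τ) * ‖w‖ ^ 2 - Real.sqrt 2 * τ * ‖w‖
        - Real.sqrt m * τ ≤ g w) ∧
    Filter.Tendsto g (Filter.cocompact (EuclideanSpace ℝ (Fin k))) Filter.atTop := by
  have hbound : ∀ w, (2 - √2 * τ) * ‖w‖ ^ 2 - √2 * τ * ‖w‖ - √m * τ ≤ g w := fun w =>
    hg w ▸ EuclideanSpace.le_two_mul_sum_sq_sub_mul_sqrt m.cast_nonneg hτ0.le w
  have hlead : 0 < 2 - √2 * τ := by
    nlinarith [Real.mul_self_sqrt (zero_le_two : (0 : ℝ) ≤ 2), Real.sqrt_nonneg 2]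
  exact ⟨hbound, tendsto_atTop_mono hbound
    ((tendsto_quadratic_atTop hlead _ _).comp tendsto_norm_cocompact_atTop)⟩

/-- For `1 ≤ k ≤ m` and `0 < τ < √2`, the function
`g(w) = 2∑ wᵢ² − τ√(m + 2∑ wᵢ² + 2∑ wᵢ⁴)` satisfies
`g(w) ≥ (2 − √2 τ)‖w‖² − √2 τ ‖w‖ − √m τ` and is coercive. -/
theorem g_lower_bound_and_coercive (m k : ℕ) (hk1 : 1 ≤ k) (hkm : k ≤ m)
    (τ : ℝ) (hτ0 : 0 < τ) (hτ2 : τ < Real.sqrt 2)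
    (g : EuclideanSpace ℝ (Fin k) → ℝ)
    (hg : ∀ w, g w = 2 * ∑ i, w i ^ 2
      - τ * Real.sqrt ((m : ℝ) + 2 * ∑ i, w i ^ 2 + 2 * ∑ i, w i ^ 4)) :
    (∀ w, (2 - Real.sqrt 2 * τ) * ‖w‖ ^ 2 - Real.sqrt 2 * τ * ‖w‖
        - Real.sqrt m * τ ≤ g w) ∧
    Filter.Tendsto g (Filter.cocompact (EuclideanSpace ℝ (Fin k))) Filter.atTop :=
  g_lower_bound_and_coercive_general m k τ hτ0 hτ2 g hg
end

section
/- Let m ≥ 1, 1 ≤ k ≤ m, and τ ∈ [1/√2, √2). Define g : ℝ^k → ℝ by g(w) = 2·Σ_{i=1}^k w_i^2 − τ·√(m + 2·Σ_{i=1}^k w_i^2 + 2·Σ_{i=1}^k w_i^4). Then w = 0 is the unique global minimizer of g; that is, g(w) > g(0) = −τ√m for every w ≠ 0. -/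
/-- For `1 ≤ k ≤ m` and `τ ∈ [1/√2, √2)`, `w = 0` is the unique global
minimizer of `g(w) = 2∑ wᵢ² − τ√(m + 2∑ wᵢ² + 2∑ wᵢ⁴)`; i.e., `g(w) > g(0) = −τ√m`
for every `w ≠ 0`. -/
theorem g_unique_minimizer_zero (m k : ℕ) (hk1 : 1 ≤ k) (hkm : k ≤ m)
    (τ : ℝ) (hτ1 : 1 / Real.sqrt 2 ≤ τ) (hτ2 : τ < Real.sqrt 2)
    (g : (Fin k → ℝ) → ℝ)
    (hg : ∀ w, g w = 2 * ∑ i, w i ^ 2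
      - τ * Real.sqrt ((m : ℝ) + 2 * ∑ i, w i ^ 2 + 2 * ∑ i, w i ^ 4)) :
    g 0 = -(τ * Real.sqrt m) ∧ ∀ w : Fin k → ℝ, w ≠ 0 → g 0 < g w := by
  have hτ0 : 0 < τ := lt_of_lt_of_le (by positivity) hτ1
  have hg0 : g 0 = -(τ * Real.sqrt m) := by
    rw [hg]
    simp
  refine ⟨hg0, fun w hw => ?_⟩
  rw [hg0, hg]
  set S : ℝ := ∑ i, w i ^ 2 with hS
  set Q : ℝ := ∑ i, w i ^ 4 with hQ
  have hSpos : 0 < S := by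
    obtain ⟨j, hj⟩ : ∃ j, w j ≠ 0 := by
      by_contra h
      push_neg at h
      exact hw (funext h)
    have : 0 < w j ^ 2 := by positivity
    exact lt_of_lt_of_le this (Finset.single_le_sum (f := fun i => w i ^ 2) (fun i _ => by positivity)
      (Finset.mem_univ j))
  have hQ0 : 0 ≤ Q := Finset.sum_nonneg fun i _ => by positivity
  have hQS : Q ≤ S ^ 2 := by
    have := Finset.sum_sq_le_sq_sum_of_nonneg
      (s := Finset.univ) (f := fun i => w i ^ 2) (fun i _ => by positivity)
    calc Q = ∑ i, (w i ^ 2) ^ 2 := by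
            apply Finset.sum_congr rfl; intro i _; ring
      _ ≤ (∑ i, w i ^ 2) ^ 2 := this
      _ = S ^ 2 := rfl
  have hτ2' : τ ^ 2 < 2 := by
    have := Real.sq_sqrt (by norm_num : (2:ℝ) ≥ 0)
    nlinarith [Real.sqrt_nonneg 2]
  have hm1 : (1:ℝ) ≤ Real.sqrt m := by
    rw [show (1:ℝ) = Real.sqrt 1 by simp]
    exact Real.sqrt_le_sqrt (by exact_mod_cast le_trans hk1 hkm)
  have hmnn : (0:ℝ) ≤ (m:ℝ) := by positivity
  have hsm : Real.sqrt m ^ 2 = (m:ℝ) := Real.sq_sqrt hmnn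
  -- key inequality via squaring
  have hX0 : (0:ℝ) ≤ (m : ℝ) + 2 * S + 2 * Q := by positivity
  have hkey : τ * Real.sqrt ((m : ℝ) + 2 * S + 2 * Q) < 2 * S + τ * Real.sqrt m := by
    have hY0 : 0 ≤ 2 * S + τ * Real.sqrt m := by positivity
    apply lt_of_pow_lt_pow_left₀ 2 hY0
    have h1 : (τ * Real.sqrt ((m : ℝ) + 2 * S + 2 * Q)) ^ 2
        = τ ^ 2 * ((m : ℝ) + 2 * S + 2 * Q) := by
      rw [mul_pow, Real.sq_sqrt hX0]
    rw [h1]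
    have h2 : (2 * S + τ * Real.sqrt m) ^ 2
        = 4 * S ^ 2 + 4 * S * τ * Real.sqrt m + τ ^ 2 * m := by
      ring_nf
      nlinarith [hsm]
    rw [h2]
    nlinarith [mul_pos hSpos hSpos, mul_pos hτ0 hSpos,
      mul_nonneg (mul_nonneg hτ0.le hSpos.le) (sub_nonneg.mpr hm1),
      mul_nonneg hQ0 (sub_nonneg.mpr hτ2'.le)]
  linarith
end

section
/- Let m ≥ 1, τ ∈ [1/√2, √2), and 0 ≤ k ≤ m. Consider minimizing F(u,v) = Σ_{i=1}^m (|u_i| + |v_i|) − τ·√(Σ_{i=1}^m (u_i^2 + v_i^2)) over the set of (u,v) ∈ ℝ^m × ℝ^m with u_i + v_i = 1 for all i, u ≥ 0, v_i ≤ 0 for i = 1,…,k, and v_i ≥ 0 for i = k+1,…,m. Then this problem has an optimal solution, and every optimal solution (u*, v*) satisfies v*_1 = ⋯ = v*_k = 0. -/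
lemma key_ineq (m : ℕ) (hm : 1 ≤ m) (τ : ℝ) (hτ0 : 0 ≤ τ) (hτ2 : τ < Real.sqrt 2)
    (s r2 : Fin m → ℝ) (hs : ∀ i, 1 ≤ s i) (hr0 : ∀ i, 0 ≤ r2 i)
    (hr : ∀ i, r2 i ≤ (s i ^ 2 + 1) / 2) :
    (m : ℝ) - τ * Real.sqrt m
      + (Real.sqrt 2 - τ) * ((∑ i, s i) - m)
        / (Real.sqrt (((∑ i, s i ^ 2) + m) / 2) + Real.sqrt m)
      ≤ (∑ i, s i) - τ * Real.sqrt (∑ i, r2 i) := by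
  set T := ∑ i, s i with hT
  set Q := ∑ i, s i ^ 2 with hQ
  have hm1 : (1 : ℝ) ≤ m := by exact_mod_cast hm
  have hsum1 : ∑ _i : Fin m, (1 : ℝ) = m := by simp
  have hQm : (m : ℝ) ≤ Q := by
    rw [← hsum1]
    apply Finset.sum_le_sum
    intro i _
    nlinarith [hs i]
  have hTm : (m : ℝ) ≤ T := by
    rw [← hsum1]
    exact Finset.sum_le_sum fun i _ => hs i
  set M := Real.sqrt m with hM
  set R := Real.sqrt ((Q + m) / 2) with hR
  have hM0 : 0 ≤ M := Real.sqrt_nonneg _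
  have hM2 : M ^ 2 = m := Real.sq_sqrt (by linarith)
  have hM1 : 1 ≤ M := by
    rw [hM, show (1:ℝ) = Real.sqrt 1 by simp]
    exact Real.sqrt_le_sqrt hm1
  have hR0 : 0 ≤ R := Real.sqrt_nonneg _
  have hR2 : R ^ 2 = (Q + m) / 2 := Real.sq_sqrt (by linarith)
  have hRM : M ≤ R := by
    rw [hM, hR]
    exact Real.sqrt_le_sqrt (by linarith)
  have hRMpos : 0 < R + M := by linarith
  have hs2 : 0 ≤ Real.sqrt 2 - τ := le_of_lt (by linarith)
  -- per-term inequality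
  have h1 : ∀ i, τ * (s i ^ 2 - 1) ≤ (2 * (R + M) - 2 * (Real.sqrt 2 - τ)) * (s i - 1) := by
    intro i
    have hsi := hs i
    have hsiQ : s i ^ 2 ≤ Q := by
      rw [hQ]
      exact Finset.single_le_sum (f := fun j => s j ^ 2) (fun j _ => sq_nonneg _) (Finset.mem_univ i)
    have h2R : Real.sqrt 2 * s i ≤ 2 * R := by
      have hsq : (Real.sqrt 2 * s i) ^ 2 ≤ (2 * R) ^ 2 := by
        have : Real.sqrt 2 ^ 2 = 2 := Real.sq_sqrt (by norm_num)
        nlinarith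
      nlinarith [Real.sqrt_nonneg 2, mul_nonneg (Real.sqrt_nonneg 2) (by linarith : (0:ℝ) ≤ s i), hR0]
    have h2M : Real.sqrt 2 ≤ 2 * M := by
      have : Real.sqrt 2 ≤ Real.sqrt 4 := Real.sqrt_le_sqrt (by norm_num)
      have h4 : Real.sqrt 4 = 2 := by
        rw [show (4:ℝ) = 2^2 by norm_num, Real.sqrt_sq (by norm_num)]
      linarith
    -- √2 (s i + 1) ≤ 2(R+M), hence τ(s i + 1) ≤ 2(R+M) - (√2-τ)(s i+1) ≤ 2(R+M) - 2(√2-τ)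
    have hkey : τ * (s i + 1) ≤ 2 * (R + M) - 2 * (Real.sqrt 2 - τ) := by
      nlinarith
    nlinarith [mul_le_mul_of_nonneg_right hkey (by linarith : (0:ℝ) ≤ s i - 1)]
  -- summed inequality
  have hsum : τ * (Q - m) ≤ (2 * (R + M) - 2 * (Real.sqrt 2 - τ)) * (T - m) := by
    have h2 : ∑ i, τ * (s i ^ 2 - 1) ≤ ∑ i, (2 * (R + M) - 2 * (Real.sqrt 2 - τ)) * (s i - 1) :=
      Finset.sum_le_sum fun i _ => h1 i
    have e1 : ∑ i, τ * (s i ^ 2 - 1) = τ * (Q - m) := by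
      rw [← Finset.mul_sum, Finset.sum_sub_distrib, hsum1, hQ]
    have e2 : ∑ i, (2 * (R + M) - 2 * (Real.sqrt 2 - τ)) * (s i - 1)
        = (2 * (R + M) - 2 * (Real.sqrt 2 - τ)) * (T - m) := by
      rw [← Finset.mul_sum, Finset.sum_sub_distrib, hsum1, hT]
    rw [e1, e2] at h2
    exact h2
  -- divide by 2(R+M)
  set D := (Real.sqrt 2 - τ) * (T - m) / (R + M) with hD
  have hDmul : D * (R + M) = (Real.sqrt 2 - τ) * (T - m) :=
    div_mul_cancel₀ _ (ne_of_gt hRMpos)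
  have hfinal : τ * (R - M) + D ≤ T - m := by
    nlinarith [hsum, hDmul, hR2, hM2, hRMpos]
  -- bound the sqrt term
  have hrs : Real.sqrt (∑ i, r2 i) ≤ R := by
    rw [hR]
    apply Real.sqrt_le_sqrt
    calc ∑ i, r2 i ≤ ∑ i, (s i ^ 2 + 1) / 2 := Finset.sum_le_sum fun i _ => hr i
      _ = (Q + m) / 2 := by
          rw [hQ]
          rw [← Finset.sum_div, Finset.sum_add_distrib, hsum1]
  have hτrs : τ * Real.sqrt (∑ i, r2 i) ≤ τ * R := mul_le_mul_of_nonneg_left hrs hτ0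
  linarith


/-- Minimizing `F(u,v) = ∑(|uᵢ|+|vᵢ|) − τ√(∑(uᵢ²+vᵢ²))` subject to
`uᵢ + vᵢ = 1`, `u ≥ 0`, `vᵢ ≤ 0` for `i ≤ k`, `vᵢ ≥ 0` for `i > k`, has an optimal
solution, and every optimal solution satisfies `vᵢ = 0` for `i ≤ k`. -/
theorem mixed_sign_problem_solutions (m k : ℕ) (hm : 1 ≤ m) (hk : k ≤ m)
    (τ : ℝ) (hτ1 : 1 / Real.sqrt 2 ≤ τ) (hτ2 : τ < Real.sqrt 2)
    (F : (Fin m → ℝ) × (Fin m → ℝ) → ℝ)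
    (hF : ∀ p, F p = (∑ i, (|p.1 i| + |p.2 i|))
      - τ * Real.sqrt (∑ i, (p.1 i ^ 2 + p.2 i ^ 2)))
    (S : Set ((Fin m → ℝ) × (Fin m → ℝ)))
    (hS : S = {p | (∀ i, p.1 i + p.2 i = 1) ∧ (∀ i, 0 ≤ p.1 i) ∧
      (∀ i : Fin m, (i : ℕ) < k → p.2 i ≤ 0) ∧
      (∀ i : Fin m, k ≤ (i : ℕ) → 0 ≤ p.2 i)}) :
    (∃ p ∈ S, ∀ q ∈ S, F p ≤ F q) ∧
    (∀ p ∈ S, (∀ q ∈ S, F p ≤ F q) → ∀ i : Fin m, (i : ℕ) < k → p.2 i = 0) := by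
  have hτ0 : 0 ≤ τ := le_trans (by positivity) hτ1
  have hsum1 : ∑ _i : Fin m, (1 : ℝ) = m := by simp
  -- the candidate optimal point
  set pstar : (Fin m → ℝ) × (Fin m → ℝ) := (fun _ => 1, fun _ => 0) with hpstar
  have hpS : pstar ∈ S := by
    rw [hS]
    exact ⟨fun i => by norm_num, fun i => by norm_num, fun i _ => le_refl 0, fun i _ => le_refl 0⟩
  have hFstar : F pstar = (m : ℝ) - τ * Real.sqrt m := by
    rw [hF]
    simp [hpstar]
  -- the quantitative lower bound for any feasible point
  have hbound : ∀ q ∈ S, ((m : ℝ) - τ * Real.sqrt m)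
      + (Real.sqrt 2 - τ) * ((∑ i, (|q.1 i| + |q.2 i|)) - m)
        / (Real.sqrt (((∑ i, (|q.1 i| + |q.2 i|) ^ 2) + m) / 2) + Real.sqrt m)
      ≤ F q := by
    intro q hq
    rw [hS] at hq
    obtain ⟨h1, _h2, _h3, _h4⟩ := hq
    rw [hF]
    refine key_ineq m hm τ hτ0 hτ2 (fun i => |q.1 i| + |q.2 i|)
      (fun i => q.1 i ^ 2 + q.2 i ^ 2) (fun i => ?_) (fun i => by positivity) (fun i => ?_)
    · calc (1 : ℝ) = |q.1 i + q.2 i| := by rw [h1 i]; norm_num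
        _ ≤ |q.1 i| + |q.2 i| := abs_add_le _ _
    · have habs : |(|q.1 i| - |q.2 i|)| ≤ 1 := by
        have h := abs_abs_sub_abs_le_abs_sub (q.1 i) (-q.2 i)
        simp only [abs_neg, sub_neg_eq_add] at h
        rw [h1 i] at h
        simpa using h
      have h2 : (|q.1 i| - |q.2 i|) ^ 2 ≤ 1 := by
        nlinarith [abs_nonneg (|q.1 i| - |q.2 i|), sq_abs (|q.1 i| - |q.2 i|)]
      nlinarith [sq_abs (q.1 i), sq_abs (q.2 i)]
  -- nonnegativity of the extra term
  have hextra : ∀ q ∈ S, 0 ≤ (Real.sqrt 2 - τ) * ((∑ i, (|q.1 i| + |q.2 i|)) - m)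
        / (Real.sqrt (((∑ i, (|q.1 i| + |q.2 i|) ^ 2) + m) / 2) + Real.sqrt m) := by
    intro q hq
    rw [hS] at hq
    obtain ⟨h1, _, _, _⟩ := hq
    have hT : (m : ℝ) ≤ ∑ i, (|q.1 i| + |q.2 i|) := by
      rw [← hsum1]
      refine Finset.sum_le_sum fun i _ => ?_
      calc (1 : ℝ) = |q.1 i + q.2 i| := by rw [h1 i]; norm_num
        _ ≤ |q.1 i| + |q.2 i| := abs_add_le _ _
    have hden : 0 < Real.sqrt (((∑ i, (|q.1 i| + |q.2 i|) ^ 2) + m) / 2) + Real.sqrt m := by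
      have : 0 < Real.sqrt m := Real.sqrt_pos.2 (by exact_mod_cast hm)
      have := Real.sqrt_nonneg (((∑ i, (|q.1 i| + |q.2 i|) ^ 2) + m) / 2)
      linarith
    apply div_nonneg (mul_nonneg (by linarith) (by linarith)) (le_of_lt hden)
  constructor
  · refine ⟨pstar, hpS, fun q hq => ?_⟩
    rw [hFstar]
    have := hbound q hq
    have := hextra q hq
    linarith
  · intro p hp hopt i hik
    by_contra hne
    have hpS' := hp
    rw [hS] at hpS'
    obtain ⟨h1, h2, h3, _⟩ := hpS'
    have hvi : p.2 i < 0 := lt_of_le_of_ne (h3 i hik) hne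
    -- then s_i > 1 so the extra term is strictly positive
    have hsi : 1 < |p.1 i| + |p.2 i| := by
      rw [abs_of_nonneg (h2 i), abs_of_neg hvi]
      have := h1 i
      linarith
    have hT : (m : ℝ) < ∑ j, (|p.1 j| + |p.2 j|) := by
      have hterm : ∀ j : Fin m, (1 : ℝ) ≤ |p.1 j| + |p.2 j| := by
        intro j
        calc (1 : ℝ) = |p.1 j + p.2 j| := by rw [h1 j]; norm_num
          _ ≤ |p.1 j| + |p.2 j| := abs_add_le _ _
      have h0 : ∀ j : Fin m, (0 : ℝ) ≤ (|p.1 j| + |p.2 j|) - 1 := fun j => by linarith [hterm j]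
      have hone : (|p.1 i| + |p.2 i|) - 1 ≤ ∑ j, ((|p.1 j| + |p.2 j|) - 1) :=
        Finset.single_le_sum (fun j _ => h0 j) (Finset.mem_univ i)
      have : ∑ j, ((|p.1 j| + |p.2 j|) - 1) = (∑ j, (|p.1 j| + |p.2 j|)) - m := by
        rw [Finset.sum_sub_distrib, hsum1]
      linarith
    have hden : 0 < Real.sqrt (((∑ j, (|p.1 j| + |p.2 j|) ^ 2) + m) / 2) + Real.sqrt m := by
      have : 0 < Real.sqrt m := Real.sqrt_pos.2 (by exact_mod_cast hm)
      have := Real.sqrt_nonneg (((∑ j, (|p.1 j| + |p.2 j|) ^ 2) + m) / 2)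
      linarith
    have hpos : 0 < (Real.sqrt 2 - τ) * ((∑ j, (|p.1 j| + |p.2 j|)) - m)
        / (Real.sqrt (((∑ j, (|p.1 j| + |p.2 j|) ^ 2) + m) / 2) + Real.sqrt m) := by
      apply div_pos (mul_pos (by linarith) (by linarith)) hden
    have hb := hbound p hp
    have hle := hopt pstar hpS
    rw [hFstar] at hle
    linarith
end

section
/- Let m ≥ 1, a = (a_1,…,a_m) ∈ ℝ^m, and τ ∈ [1/√2, √2). The partition problem for a is solvable if and only if there exist u, v ∈ ℝ^m with u_i + v_i = 1 for all i ∈ [m], Σ_{i=1}^m a_i (u_i − v_i) = 0, and Σ_{i=1}^m (|u_i| + |v_i|) − τ·√(Σ_{i=1}^m (u_i^2 + v_i^2)) = m − τ√m (equivalently, the minimum of this objective over the linearly constrained feasible set equals m − τ√m). -/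
set_option maxHeartbeats 1600000 in
/-- For `τ ∈ [1/√2, √2)`, the partition problem for `a` is solvable iff
there exist `u, v` with `uᵢ + vᵢ = 1` for all `i`, `∑ aᵢ(uᵢ − vᵢ) = 0`, and
`∑(|uᵢ| + |vᵢ|) − τ√(∑(uᵢ² + vᵢ²)) = m − τ√m`. -/
theorem partition_iff_CP_value (m : ℕ) (hm : 1 ≤ m) (a : Fin m → ℝ) (τ : ℝ)
    (hτ1 : 1 / Real.sqrt 2 ≤ τ) (hτ2 : τ < Real.sqrt 2) :
    (∃ ε : Fin m → ℝ, (∀ i, ε i = 1 ∨ ε i = -1) ∧ ∑ i, ε i * a i = 0) ↔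
    (∃ u v : Fin m → ℝ,
      (∀ i, u i + v i = 1) ∧
      (∑ i, a i * (u i - v i)) = 0 ∧
      (∑ i, (|u i| + |v i|)) - τ * Real.sqrt (∑ i, (u i ^ 2 + v i ^ 2))
        = (m : ℝ) - τ * Real.sqrt m) := by
  have hr0 : (0:ℝ) < Real.sqrt 2 := Real.sqrt_pos.mpr (by norm_num)
  have hτ0 : 0 < τ := lt_of_lt_of_le (by positivity) hτ1
  constructor
  · rintro ⟨ε, hε, hsum⟩
    refine ⟨fun i => (1 + ε i)/2, fun i => (1 - ε i)/2, fun i => by ring, ?_, ?_⟩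
    · have h : ∀ i, a i * ((1 + ε i)/2 - (1 - ε i)/2) = ε i * a i := fun i => by ring
      simp only [h]; exact hsum
    · show (∑ i, (|(1 + ε i)/2| + |(1 - ε i)/2|))
        - τ * Real.sqrt (∑ i, (((1 + ε i)/2)^2 + ((1 - ε i)/2)^2)) = (m:ℝ) - τ * Real.sqrt m
      have e1 : ∑ i, (|(1 + ε i)/2| + |(1 - ε i)/2|) = (m:ℝ) := by
        calc ∑ i, (|(1 + ε i)/2| + |(1 - ε i)/2|) = ∑ _i : Fin m, (1:ℝ) :=
              Finset.sum_congr rfl fun i _ => by rcases hε i with h | h <;> rw [h] <;> norm_num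
          _ = m := by simp
      have e2 : ∑ i, (((1 + ε i)/2)^2 + ((1 - ε i)/2)^2) = (m:ℝ) := by
        calc ∑ i, (((1 + ε i)/2)^2 + ((1 - ε i)/2)^2) = ∑ _i : Fin m, (1:ℝ) :=
              Finset.sum_congr rfl fun i _ => by rcases hε i with h | h <;> rw [h] <;> norm_num
          _ = m := by simp
      rw [e1, e2]
  · rintro ⟨u, v, huv, hlin, hval⟩
    -- notation
    set r : ℝ := Real.sqrt 2 with hrdef
    clear_value r
    set sm : ℝ := Real.sqrt m with hsmdef
    clear_value sm
    have hr2 : r^2 = 2 := by rw [hrdef]; exact Real.sq_sqrt (by norm_num)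
    have hsm2 : sm^2 = m := by rw [hsmdef]; exact Real.sq_sqrt (Nat.cast_nonneg m)
    have hm1 : (1:ℝ) ≤ m := by exact_mod_cast hm
    have hr1 : (1:ℝ) ≤ r := by
      rw [hrdef, show (1:ℝ) = Real.sqrt 1 from Real.sqrt_one.symm]
      exact Real.sqrt_le_sqrt (by norm_num)
    have hsm1 : (1:ℝ) ≤ sm := by
      rw [hsmdef, show (1:ℝ) = Real.sqrt 1 from Real.sqrt_one.symm]
      exact Real.sqrt_le_sqrt hm1
    have hsm0 : (0:ℝ) ≤ sm := by linarith
    -- pointwise facts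
    have hQpt : ∀ i, u i ^ 2 + v i ^ 2 = (1 + (u i - v i) ^ 2)/2 := fun i => by
      linear_combination ((u i + v i + 1)/2) * huv i
    set M : Fin m → ℝ := fun i => max 1 |u i - v i| with hMdef
    have hM1 : ∀ i, 1 ≤ M i := fun i => le_max_left _ _
    have hMt : ∀ i, |u i - v i| ≤ M i := fun i => le_max_right _ _
    have hLM : ∀ i, M i ≤ |u i| + |v i| := by
      intro i
      refine max_le ?_ ?_
      · calc (1:ℝ) = |u i + v i| := by rw [huv i]; norm_num
          _ ≤ |u i| + |v i| := abs_add_le _ _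
      · calc |u i - v i| = |u i + -v i| := by ring_nf
          _ ≤ |u i| + |-v i| := abs_add_le _ _
          _ = |u i| + |v i| := by rw [abs_neg]
    clear_value M
    set D : ℝ := ∑ i, (M i - 1) with hDdef
    clear_value D
    have hD0 : 0 ≤ D := by
      rw [hDdef]
      exact Finset.sum_nonneg fun i _ => by linarith [hM1 i]
    have hMsum : ∑ i, M i = (m:ℝ) + D := by
      have : D = (∑ i, M i) - m := by
        rw [hDdef, Finset.sum_sub_distrib]; simp
      linarith
    -- ∑ M² ≤ m + 2D + D²
    have hdle : ∀ i : Fin m, M i - 1 ≤ D := by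
      intro i
      rw [hDdef]
      exact Finset.single_le_sum (f := fun j => M j - 1)
        (fun j _ => by show (0:ℝ) ≤ M j - 1; linarith [hM1 j]) (Finset.mem_univ i)
    have hd2 : ∑ i, (M i - 1)^2 ≤ D^2 := by
      calc ∑ i, (M i - 1)^2 ≤ ∑ i, (M i - 1)*D :=
            Finset.sum_le_sum fun i _ => by nlinarith [hM1 i, hdle i]
        _ = D * D := by rw [← Finset.sum_mul, ← hDdef]
        _ = D^2 := by ring
    have hsqM : ∑ i, M i ^ 2 ≤ (m:ℝ) + 2*D + D^2 := by
      have h3 : ∑ i, M i ^2 = ∑ i, (1 + 2*(M i - 1) + (M i - 1)^2) :=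
        Finset.sum_congr rfl fun i _ => by ring
      have h4 : ∑ i, ((1:ℝ) + 2*(M i - 1) + (M i - 1)^2)
          = (m:ℝ) + 2*D + ∑ i, (M i - 1)^2 := by
        rw [Finset.sum_add_distrib, Finset.sum_add_distrib, ← Finset.mul_sum, ← hDdef]
        simp
      rw [h3, h4]; linarith
    have hS : ∑ i, (u i - v i) ^ 2 ≤ ∑ i, M i ^ 2 :=
      Finset.sum_le_sum fun i _ => by
        nlinarith [hMt i, abs_nonneg (u i - v i), sq_abs (u i - v i), hM1 i]
    have hQsum : ∑ i, (u i ^ 2 + v i ^ 2) = ((m:ℝ) + ∑ i, (u i - v i) ^ 2)/2 := by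
      rw [Finset.sum_congr rfl fun i _ => hQpt i, ← Finset.sum_div, Finset.sum_add_distrib]
      simp
    set Q : ℝ := ∑ i, (u i ^ 2 + v i ^ 2) with hQdef
    clear_value Q
    have hQ0 : 0 ≤ Q := by
      rw [hQdef]
      exact Finset.sum_nonneg fun i _ => by positivity
    set Qs : ℝ := Real.sqrt Q with hQsdef
    clear_value Qs
    have hQs0 : 0 ≤ Qs := by rw [hQsdef]; exact Real.sqrt_nonneg _
    have hQs2 : Qs^2 = Q := by rw [hQsdef]; exact Real.sq_sqrt hQ0
    -- 2Q ≤ (r sm + D)²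
    have hrsm1 : (0:ℝ) ≤ r * sm - 1 := by
      have h := mul_le_mul hr1 hsm1 zero_le_one (by linarith)
      linarith
    have hrs : (r * sm)^2 = 2 * m := by rw [mul_pow, hr2, hsm2]
    have hprod : 0 ≤ (r * sm - 1) * D := mul_nonneg hrsm1 hD0
    have hQle : 2 * Q ≤ (r * sm + D)^2 := by
      have h2Q : 2 * Q = (m:ℝ) + ∑ i, (u i - v i)^2 := by rw [hQsum]; ring
      nlinarith [hS, hsqM, hprod, hrs, h2Q]
    have hW : r * Qs ≤ r * sm + D := by
      have h2 : 0 ≤ r * sm + D := by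
        have := mul_nonneg (le_of_lt hr0) hsm0
        linarith
      have h1 : Real.sqrt (2 * Q) ≤ r * sm + D := by
        calc Real.sqrt (2*Q) ≤ Real.sqrt ((r*sm + D)^2) := Real.sqrt_le_sqrt hQle
          _ = r*sm + D := Real.sqrt_sq h2
      calc r * Qs = Real.sqrt (2*Q) := by
            rw [hQsdef, hrdef, ← Real.sqrt_mul (by norm_num : (0:ℝ) ≤ 2)]
        _ ≤ r*sm + D := h1
    set L : ℝ := ∑ i, (|u i| + |v i|) with hLdef
    clear_value L
    have hLm : (m:ℝ) + D ≤ L := by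
      rw [← hMsum, hLdef]; exact Finset.sum_le_sum fun i _ => hLM i
    -- hval : L - τ * Qs = m - τ * sm
    have hDeq : D = 0 := by
      have h5 : τ * (r * Qs) ≤ τ * (r * sm + D) :=
        mul_le_mul_of_nonneg_left hW (le_of_lt hτ0)
      have h6 : D + τ * sm ≤ τ * Qs := by linarith [hval, hLm]
      have h7 : r * (D + τ * sm) ≤ r * (τ * Qs) :=
        mul_le_mul_of_nonneg_left h6 (by linarith)
      have h8 : r * D ≤ τ * D := by linarith [h5, h7]
      have h9 : D ≤ 0 := by nlinarith [h8, hτ2, hD0]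
      linarith
    have hMone : ∀ i, M i = 1 := by
      have h := (Finset.sum_eq_zero_iff_of_nonneg
        (fun j (_ : j ∈ Finset.univ) => by linarith [hM1 j] : ∀ j ∈ Finset.univ, (0:ℝ) ≤ M j - 1)).mp
        (by rw [← hDdef, hDeq])
      intro i
      have := h i (Finset.mem_univ i)
      linarith
    have htle : ∀ i, (u i - v i)^2 ≤ 1 := fun i => by
      nlinarith [hMt i, hMone i, sq_abs (u i - v i), abs_nonneg (u i - v i)]
    have hSle : ∑ i, (u i - v i)^2 ≤ (m:ℝ) := by
      calc ∑ i, (u i - v i)^2 ≤ ∑ _i : Fin m, (1:ℝ) :=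
            Finset.sum_le_sum fun i _ => htle i
        _ = m := by simp
    have hQlem : Q ≤ (m:ℝ) := by rw [hQsum]; linarith
    have hQsle : Qs ≤ sm := by
      rw [hQsdef, hsmdef]; exact Real.sqrt_le_sqrt hQlem
    have hQsge : sm ≤ Qs := by nlinarith [hval, hLm, hDeq, hτ0]
    have hQeq : Q = (m:ℝ) := by nlinarith [hQs2, hsm2]
    have hSeq : ∑ i, (u i - v i)^2 = (m:ℝ) := by
      linarith [hQsum, hQeq]
    have ht2 : ∀ i, (u i - v i)^2 = 1 := by
      have hsum1 : ∑ i, (u i - v i)^2 = ∑ _i : Fin m, (1:ℝ) := by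
        rw [hSeq]; simp
      have h := (Finset.sum_eq_sum_iff_of_le (fun i (_ : i ∈ Finset.univ) => htle i)).mp hsum1
      intro i
      exact h i (Finset.mem_univ i)
    refine ⟨fun i => u i - v i, ?_, ?_⟩
    · intro i
      have h := ht2 i
      have hfact : (u i - v i - 1) * (u i - v i + 1) = 0 := by linear_combination h
      rcases mul_eq_zero.mp hfact with h' | h'
      · left; show u i - v i = 1; linarith
      · right; show u i - v i = -1; linarith
    · simpa [mul_comm] using hlin
end

section
/- Let m ≥ 1, a ∈ ℝ^m, and λ > 0. Define f(u,v) = (Σ_{i=1}^m a_i(u_i − v_i))^2 + Σ_{i=1}^m (u_i + v_i − 1)^2 + λ·(Σ_{i=1}^m (|u_i| + |v_i|) − √(Σ_{i=1}^m (u_i^2 + v_i^2))). Then f attains a global minimum on ℝ^m × ℝ^m; that is, there exists (u*, v*) with f(u*, v*) ≤ f(u, v) for all (u, v) ∈ ℝ^m × ℝ^m. -/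
set_option maxHeartbeats 1000000

/-- For `λ > 0`, the unconstrained objective
`f(u,v) = (∑ aᵢ(uᵢ−vᵢ))² + ∑(uᵢ+vᵢ−1)² + λ(∑(|uᵢ|+|vᵢ|) − √(∑(uᵢ²+vᵢ²)))`
attains a global minimum on `ℝᵐ × ℝᵐ`. -/
theorem UP_instance_attains_min (m : ℕ) (hm : 1 ≤ m) (a : Fin m → ℝ)
    (lam : ℝ) (hlam : 0 < lam)
    (f : (Fin m → ℝ) × (Fin m → ℝ) → ℝ)
    (hf : ∀ p, f p = (∑ i, a i * (p.1 i - p.2 i)) ^ 2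
      + ∑ i, (p.1 i + p.2 i - 1) ^ 2
      + lam * ((∑ i, (|p.1 i| + |p.2 i|))
        - Real.sqrt (∑ i, (p.1 i ^ 2 + p.2 i ^ 2)))) :
    ∃ p : (Fin m → ℝ) × (Fin m → ℝ), ∀ q, f p ≤ f q := by
  haveI : Nonempty (Fin m) := ⟨⟨0, hm⟩⟩
  -- continuity of f
  have hfc : Continuous f := by
    have hfe : f = fun p : (Fin m → ℝ) × (Fin m → ℝ) =>
        (∑ i, a i * (p.1 i - p.2 i)) ^ 2
        + ∑ i, (p.1 i + p.2 i - 1) ^ 2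
        + lam * ((∑ i, (|p.1 i| + |p.2 i|))
          - Real.sqrt (∑ i, (p.1 i ^ 2 + p.2 i ^ 2))) := funext hf
    rw [hfe]
    apply Continuous.add
    apply Continuous.add
    · exact (continuous_finset_sum _ fun i _ => continuous_const.mul
        (((continuous_apply i).comp continuous_fst).sub
          ((continuous_apply i).comp continuous_snd))).pow 2
    · exact continuous_finset_sum _ fun i _ =>
        ((((continuous_apply i).comp continuous_fst).add
          ((continuous_apply i).comp continuous_snd)).sub continuous_const).pow 2
    · exact continuous_const.mul ((continuous_finset_sum _ fun i _ =>
        (((continuous_apply i).comp continuous_fst).abs.add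
          ((continuous_apply i).comp continuous_snd).abs)).sub
        (Real.continuous_sqrt.comp (continuous_finset_sum _ fun i _ =>
          (((continuous_apply i).comp continuous_fst).pow 2).add
            (((continuous_apply i).comp continuous_snd).pow 2))))
  -- value at 0
  have hf0 : f 0 = m := by
    rw [hf 0]
    simp
  set R : ℝ := max (4 * (m + 1) / lam) (2 + 2 * Real.sqrt (m + 1)) with hR
  have hsqnn : (0:ℝ) ≤ Real.sqrt (m+1) := Real.sqrt_nonneg _
  have hR0 : 0 ≤ R := le_trans (by linarith) (le_max_right _ _)
  -- coercivity bound
  have key : ∀ q : (Fin m → ℝ) × (Fin m → ℝ), R ≤ ‖q‖ → (m:ℝ) + 1 ≤ f q := by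
    intro q hq
    set u := q.1 with hu
    set v := q.2 with hv
    set M := ‖q‖ with hM
    set L := ∑ i, (|u i| + |v i|) with hL
    set S2 := ∑ i, (u i ^ 2 + v i ^ 2) with hS2
    have hS2nn : 0 ≤ S2 := Finset.sum_nonneg fun i _ => by positivity
    have hLnn : 0 ≤ L := Finset.sum_nonneg fun i _ => by positivity
    have hMnn : 0 ≤ M := norm_nonneg q
    have hTnn : (0:ℝ) ≤ ∑ i, (u i + v i - 1) ^ 2 :=
      Finset.sum_nonneg fun i _ => sq_nonneg _
    have hAnn : (0:ℝ) ≤ (∑ i, a i * (u i - v i)) ^ 2 := sq_nonneg _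
    have hcu : ∀ i, |u i| ≤ M := by
      intro i
      calc |u i| = ‖q.1 i‖ := rfl
        _ ≤ ‖q.1‖ := norm_le_pi_norm q.1 i
        _ ≤ ‖q‖ := norm_fst_le q
    have hcv : ∀ i, |v i| ≤ M := by
      intro i
      calc |v i| = ‖q.2 i‖ := rfl
        _ ≤ ‖q.2‖ := norm_le_pi_norm q.2 i
        _ ≤ ‖q‖ := norm_snd_le q
    -- S2 ≤ M * L
    have hS2ML : S2 ≤ M * L := by
      rw [hS2, hL, Finset.mul_sum]
      apply Finset.sum_le_sum
      intro i _
      have h1 := hcu i; have h2 := hcv i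
      have h3 := abs_nonneg (u i); have h4 := abs_nonneg (v i)
      nlinarith [sq_abs (u i), sq_abs (v i)]
    -- S2 ≤ L ^ 2
    have hS2L : S2 ≤ L ^ 2 := by
      calc S2 ≤ ∑ i, (|u i| + |v i|) ^ 2 := by
            apply Finset.sum_le_sum
            intro i _
            nlinarith [sq_abs (u i), sq_abs (v i), abs_nonneg (u i), abs_nonneg (v i)]
        _ ≤ L ^ 2 := Finset.sum_sq_le_sq_sum_of_nonneg fun i _ => by positivity
    set S := Real.sqrt S2 with hS
    have hSnn : 0 ≤ S := Real.sqrt_nonneg _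
    have hSL : S ≤ L := by
      calc S ≤ Real.sqrt (L ^ 2) := Real.sqrt_le_sqrt hS2L
        _ = L := Real.sqrt_sq hLnn
    have hSavg : S ≤ (M + L) / 2 := by
      calc S ≤ Real.sqrt (((M + L) / 2) ^ 2) := Real.sqrt_le_sqrt (by nlinarith)
        _ = (M + L) / 2 := Real.sqrt_sq (by linarith)
    rw [hf q]
    rcases le_total ((3/2) * M) L with hc | hc
    · -- ℓ1 far from ℓ∞ : the lam term dominates
      have hRa : 4 * (m + 1) / lam ≤ M := le_trans (le_max_left _ _) hq
      have h4 : 4 * ((m:ℝ) + 1) ≤ lam * M := by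
        rw [div_le_iff₀ hlam] at hRa; linarith
      have h1 : M / 4 ≤ L - S := by linarith
      nlinarith [mul_le_mul_of_nonneg_left h1 hlam.le]
    · -- mass concentrated on one coordinate: quadratic term dominates
      obtain ⟨j, hj⟩ : ∃ j, M ≤ |u j| ∨ M ≤ |v j| := by
        rcases max_choice ‖q.1‖ ‖q.2‖ with h | h
        · obtain ⟨j, -, hj⟩ := Finset.exists_mem_eq_sup Finset.univ
            Finset.univ_nonempty (fun i => ‖q.1 i‖₊)
          exact ⟨j, Or.inl (by
            have : ‖q‖ = ‖q.1‖ := by rw [Prod.norm_def, h]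
            rw [hM, this, Pi.norm_def, hj]; rfl)⟩
        · obtain ⟨j, -, hj⟩ := Finset.exists_mem_eq_sup Finset.univ
            Finset.univ_nonempty (fun i => ‖q.2 i‖₊)
          exact ⟨j, Or.inr (by
            have : ‖q‖ = ‖q.2‖ := by rw [Prod.norm_def, h]
            rw [hM, this, Pi.norm_def, hj]; rfl)⟩
      have hsum_le : |u j| + |v j| ≤ L := by
        rw [hL]
        exact Finset.single_le_sum (f := fun i => |u i| + |v i|)
          (fun i _ => by positivity) (Finset.mem_univ j)
      have hRb : 2 + 2 * Real.sqrt (m + 1) ≤ M := le_trans (le_max_right _ _) hq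
      have hr2 : Real.sqrt (m+1) ^ 2 = (m:ℝ) + 1 := Real.sq_sqrt (by positivity)
      have hs : M / 2 ≤ |u j + v j| := by
        rcases hj with hj | hj
        · have h5 : |u j| ≤ |u j + v j| + |v j| := by
            have := abs_add_le (u j + v j) (-v j); simpa using this
          have := hcv j
          linarith
        · have h5 : |v j| ≤ |u j + v j| + |u j| := by
            have := abs_add_le (u j + v j) (-u j)
            simpa [add_comm, abs_sub_comm] using this
          have := hcu j
          linarith
      have hsq : (m:ℝ) + 1 ≤ (u j + v j - 1) ^ 2 := by
        rcases abs_cases (u j + v j) with ⟨h, _⟩ | ⟨h, _⟩ <;>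
          nlinarith [sq_nonneg (u j + v j - 1 - Real.sqrt (m+1)),
            sq_nonneg (u j + v j - 1 + Real.sqrt (m+1))]
      have hT : (u j + v j - 1) ^ 2 ≤ ∑ i, (u i + v i - 1) ^ 2 :=
        Finset.single_le_sum (f := fun i => (u i + v i - 1) ^ 2)
          (fun i _ => sq_nonneg _) (Finset.mem_univ j)
      have h6 : 0 ≤ lam * (L - S) := mul_nonneg hlam.le (by linarith)
      linarith
  -- minimize over the closed ball
  obtain ⟨p₀, hp₀mem, hp₀⟩ := (isCompact_closedBall (0 : (Fin m → ℝ) × (Fin m → ℝ)) R).exists_isMinOn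
    ⟨0, by simp [Metric.mem_closedBall, hR0]⟩ hfc.continuousOn
  refine ⟨p₀, fun q => ?_⟩
  by_cases hq : q ∈ Metric.closedBall (0 : (Fin m → ℝ) × (Fin m → ℝ)) R
  · exact hp₀ hq
  · have h1 : f p₀ ≤ f 0 := hp₀ (by simp [Metric.mem_closedBall, hR0])
    have h2 : R ≤ ‖q‖ := by
      simp only [Metric.mem_closedBall, dist_zero_right, not_le] at hq
      exact hq.le
    have := key q h2
    rw [hf0] at h1
    linarith
end

section
/- Let m ≥ 1, a ∈ ℝ^m, and λ > 0. Define f(u,v) = (Σ_{i=1}^m a_i(u_i − v_i))^2 + Σ_{i=1}^m (u_i + v_i − 1)^2 + λ·(Σ_{i=1}^m (u_i + v_i) − √(Σ_{i=1}^m (u_i^2 + v_i^2))). Then f attains a global minimum on the set {(u,v) ∈ ℝ^m × ℝ^m : u ≥ 0, v ≥ 0}. -/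
private lemma sqrt_le_sum_aux {m : ℕ} (u v : Fin m → ℝ) (hu : ∀ i, 0 ≤ u i)
    (hv : ∀ i, 0 ≤ v i) :
    Real.sqrt (∑ i, (u i ^ 2 + v i ^ 2)) ≤ ∑ i, (u i + v i) := by
  have h1 : ∑ i, (u i ^ 2 + v i ^ 2) ≤ ∑ i, (u i + v i) ^ 2 :=
    Finset.sum_le_sum (fun i _ => by nlinarith [mul_nonneg (hu i) (hv i)])
  have h2 : ∑ i, (u i + v i) ^ 2 ≤ (∑ i, (u i + v i)) ^ 2 :=
    Finset.sum_sq_le_sq_sum_of_nonneg (fun i _ => add_nonneg (hu i) (hv i))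
  have hn : 0 ≤ ∑ i, (u i + v i) :=
    Finset.sum_nonneg (fun i _ => add_nonneg (hu i) (hv i))
  calc Real.sqrt (∑ i, (u i ^ 2 + v i ^ 2)) ≤ Real.sqrt ((∑ i, (u i + v i)) ^ 2) :=
        Real.sqrt_le_sqrt (h1.trans h2)
    _ = ∑ i, (u i + v i) := Real.sqrt_sq hn

/-- For `λ > 0`, the objective
`f(u,v) = (∑ aᵢ(uᵢ−vᵢ))² + ∑(uᵢ+vᵢ−1)² + λ(∑(uᵢ+vᵢ) − √(∑(uᵢ²+vᵢ²)))`
attains a global minimum on the nonnegative orthant `{(u,v) : u ≥ 0, v ≥ 0}`. -/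
theorem NUP_instance_attains_min (m : ℕ) (hm : 1 ≤ m) (a : Fin m → ℝ)
    (lam : ℝ) (hlam : 0 < lam)
    (f : (Fin m → ℝ) × (Fin m → ℝ) → ℝ)
    (hf : ∀ p, f p = (∑ i, a i * (p.1 i - p.2 i)) ^ 2
      + ∑ i, (p.1 i + p.2 i - 1) ^ 2
      + lam * ((∑ i, (p.1 i + p.2 i))
        - Real.sqrt (∑ i, (p.1 i ^ 2 + p.2 i ^ 2)))) :
    ∃ p : (Fin m → ℝ) × (Fin m → ℝ),
      ((∀ i, 0 ≤ p.1 i) ∧ (∀ i, 0 ≤ p.2 i)) ∧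
      ∀ q : (Fin m → ℝ) × (Fin m → ℝ),
        ((∀ i, 0 ≤ q.1 i) ∧ (∀ i, 0 ≤ q.2 i)) → f p ≤ f q := by
  have hfc : Continuous f := by
    have : f = fun p : (Fin m → ℝ) × (Fin m → ℝ) =>
        (∑ i, a i * (p.1 i - p.2 i)) ^ 2
      + ∑ i, (p.1 i + p.2 i - 1) ^ 2
      + lam * ((∑ i, (p.1 i + p.2 i))
        - Real.sqrt (∑ i, (p.1 i ^ 2 + p.2 i ^ 2))) := funext hf
    rw [this]
    fun_prop
  set R : ℝ := (m : ℝ) + 1 with hR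
  set K : Set ((Fin m → ℝ) × (Fin m → ℝ)) :=
    (Set.Icc 0 (fun _ => R)) ×ˢ (Set.Icc 0 (fun _ => R)) with hK
  have hKc : IsCompact K := isCompact_Icc.prod isCompact_Icc
  have hRpos : (0 : ℝ) ≤ R := by positivity
  have h0K : ((0 : Fin m → ℝ), (0 : Fin m → ℝ)) ∈ K := by
    constructor <;> exact ⟨le_refl _, fun i => hRpos⟩
  obtain ⟨p, hpK, hpmin⟩ := hKc.exists_isMinOn ⟨_, h0K⟩ hfc.continuousOn
  have hp1 : ∀ i, 0 ≤ p.1 i := fun i => hpK.1.1 i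
  have hp2 : ∀ i, 0 ≤ p.2 i := fun i => hpK.2.1 i
  -- value at origin
  have hf0 : f ((0 : Fin m → ℝ), (0 : Fin m → ℝ)) = (m : ℝ) := by
    rw [hf]; simp
  have hfpm : f p ≤ (m : ℝ) := hf0 ▸ hpmin h0K
  refine ⟨p, ⟨hp1, hp2⟩, ?_⟩
  rintro q ⟨hq1, hq2⟩
  by_cases hq : q ∈ K
  · exact hpmin hq
  · -- some coordinate exceeds R
    have hbig : ∃ j, R < q.1 j + q.2 j := by
      by_contra h
      push_neg at h
      apply hq
      constructor
      · exact ⟨fun i => hq1 i, fun i => by have := h i; have := hq2 i; linarith⟩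
      · exact ⟨fun i => hq2 i, fun i => by have := h i; have := hq1 i; linarith⟩
    obtain ⟨j, hj⟩ := hbig
    have hterm : (m : ℝ) ^ 2 ≤ (q.1 j + q.2 j - 1) ^ 2 := by
      have hm1 : (1 : ℝ) ≤ (m : ℝ) := by exact_mod_cast hm
      nlinarith
    have hsum : (q.1 j + q.2 j - 1) ^ 2 ≤ ∑ i, (q.1 i + q.2 i - 1) ^ 2 :=
      Finset.single_le_sum (f := fun i => (q.1 i + q.2 i - 1) ^ 2) (fun i _ => sq_nonneg _) (Finset.mem_univ j)
    have hlamterm : 0 ≤ lam * ((∑ i, (q.1 i + q.2 i))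
        - Real.sqrt (∑ i, (q.1 i ^ 2 + q.2 i ^ 2))) :=
      mul_nonneg hlam.le (by linarith [sqrt_le_sum_aux q.1 q.2 hq1 hq2])
    have hmm : (m : ℝ) ≤ (m : ℝ) ^ 2 := by
      have hm1 : (1 : ℝ) ≤ (m : ℝ) := by exact_mod_cast hm
      nlinarith
    have : (m : ℝ) ≤ f q := by
      rw [hf]
      have := sq_nonneg (∑ i, a i * (q.1 i - q.2 i))
      linarith
    linarith
end

section
/- Let m ≥ 1, a ∈ ℝ^m, λ > 0, and define f(u,v) = (Σ_{i=1}^m a_i(u_i − v_i))^2 + Σ_{i=1}^m (u_i + v_i − 1)^2 + λ·(Σ_{i=1}^m (|u_i| + |v_i|) − √(Σ_{i=1}^m (u_i^2 + v_i^2))). If max{|u_j|, |v_j|} > 1 + √m + 2m/λ for some index j ∈ [m], then f(u,v) > m = f(0,0). -/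
open Finset


lemma aux_sum_sq_le_sq_sum {ι : Type*} (s : Finset ι) (c : ι → ℝ) (hc : ∀ i ∈ s, 0 ≤ c i) :
    ∑ i ∈ s, (c i)^2 ≤ (∑ i ∈ s, c i)^2 := by
  calc ∑ i ∈ s, (c i)^2 ≤ ∑ i ∈ s, c i * ∑ k ∈ s, c k := by
        apply Finset.sum_le_sum
        intro i hi
        have h1 : c i ≤ ∑ k ∈ s, c k := Finset.single_le_sum hc hi
        nlinarith [hc i hi]
    _ = (∑ i ∈ s, c i)^2 := by rw [← Finset.sum_mul]; ring

lemma aux_sqrt_sum_le {ι : Type*} (s : Finset ι) (u v : ι → ℝ) :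
    Real.sqrt (∑ i ∈ s, (u i^2 + v i^2)) ≤ ∑ i ∈ s, (|u i| + |v i|) := by
  have hnn : 0 ≤ ∑ i ∈ s, (|u i| + |v i|) := Finset.sum_nonneg (fun i _ => by positivity)
  rw [show (∑ i ∈ s, (|u i| + |v i|)) = Real.sqrt ((∑ i ∈ s, (|u i| + |v i|))^2) from
    (Real.sqrt_sq hnn).symm]
  apply Real.sqrt_le_sqrt
  calc ∑ i ∈ s, (u i^2 + v i^2) ≤ ∑ i ∈ s, (|u i| + |v i|)^2 := by
        apply Finset.sum_le_sum; intro i hi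
        nlinarith [abs_nonneg (u i), abs_nonneg (v i), sq_abs (u i), sq_abs (v i)]
    _ ≤ _ := aux_sum_sq_le_sq_sum s _ (fun i _ => by positivity)

lemma aux_sqrt_add_le (x y : ℝ) (hx : 0 ≤ x) (hy : 0 ≤ y) :
    Real.sqrt (x + y) ≤ Real.sqrt x + Real.sqrt y := by
  rw [show Real.sqrt x + Real.sqrt y
      = Real.sqrt ((Real.sqrt x + Real.sqrt y)^2) from
    (Real.sqrt_sq (by positivity)).symm]
  apply Real.sqrt_le_sqrt
  nlinarith [Real.sq_sqrt hx, Real.sq_sqrt hy, Real.sqrt_nonneg x, Real.sqrt_nonneg y]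

set_option maxHeartbeats 1000000 in
/-- If `max{|uⱼ|, |vⱼ|} > 1 + √m + 2m/λ` for some index `j`, then
`f(u,v) > m = f(0,0)`, where `f` is the unconstrained L1−L2 objective. -/
theorem f_large_outside_ball (m : ℕ) (hm : 1 ≤ m) (a : Fin m → ℝ)
    (lam : ℝ) (hlam : 0 < lam)
    (f : (Fin m → ℝ) × (Fin m → ℝ) → ℝ)
    (hf : ∀ p, f p = (∑ i, a i * (p.1 i - p.2 i)) ^ 2
      + ∑ i, (p.1 i + p.2 i - 1) ^ 2
      + lam * ((∑ i, (|p.1 i| + |p.2 i|))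
        - Real.sqrt (∑ i, (p.1 i ^ 2 + p.2 i ^ 2))))
    (u v : Fin m → ℝ) (j : Fin m)
    (hj : 1 + Real.sqrt m + 2 * m / lam < max |u j| |v j|) :
    (m : ℝ) < f (u, v) ∧ f (0, 0) = (m : ℝ) := by

  constructor
  · rw [hf]
    simp only
    set S1 := ∑ i, (|u i| + |v i|) with hS1
    set T := ∑ i, (u i^2 + v i^2) with hT
    set Q := ∑ i, (u i + v i - 1)^2 with hQdef
    clear_value S1 T Q
    have hQnn : 0 ≤ Q := by rw [hQdef]; exact Finset.sum_nonneg (fun i _ => sq_nonneg _)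
    have hsq1 : (0:ℝ) ≤ (∑ i, a i * (u i - v i))^2 := sq_nonneg _
    have hS2S1 : Real.sqrt T ≤ S1 := by rw [hS1, hT]; exact aux_sqrt_sum_le univ u v
    by_cases hQ : (m:ℝ) < Q
    · nlinarith
    · push_neg at hQ
      have hterm : (u j + v j - 1)^2 ≤ (m:ℝ) :=
        le_trans (le_trans (Finset.single_le_sum (fun i _ => sq_nonneg (u i + v i - 1)) (mem_univ j)) (le_of_eq hQdef.symm)) hQ
      have hsm : Real.sqrt m * Real.sqrt m = m := Real.mul_self_sqrt (Nat.cast_nonneg m)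
      have h1' : |u j + v j - 1| ≤ Real.sqrt m := by
        rw [← Real.sqrt_sq_eq_abs]; exact Real.sqrt_le_sqrt hterm
      have habs : |u j + v j| ≤ 1 + Real.sqrt m := by
        have he : u j + v j = (u j + v j - 1) + 1 := by ring
        rw [he]
        calc |(u j + v j - 1) + 1| ≤ |u j + v j - 1| + |(1:ℝ)| := abs_add_le _ _
          _ ≤ 1 + Real.sqrt m := by rw [abs_one]; linarith
      set A := max |u j| |v j| with hA
      set B := min |u j| |v j| with hBdef
      clear_value A B
      have hBnn : 0 ≤ B := by rw [hBdef]; exact le_min (abs_nonneg _) (abs_nonneg _)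
      have hBA : B ≤ A := by rw [hA, hBdef]; exact min_le_max
      have hu1 : |u j| ≤ |u j + v j| + |v j| := by
        have := abs_add_le (u j + v j) (-(v j)); simpa using this
      have hv1 : |v j| ≤ |u j + v j| + |u j| := by
        have := abs_add_le (u j + v j) (-(u j)); simpa [add_comm] using this
      have hAB : A ≤ B + |u j + v j| := by
        rcases le_total |u j| |v j| with h | h
        · rw [hA, hBdef, max_eq_right h, min_eq_left h]; linarith
        · rw [hA, hBdef, max_eq_left h, min_eq_right h]; linarith
      have hBlb : 2 * m / lam < B := by
        have : 1 + Real.sqrt m + 2 * m / lam < B + (1 + Real.sqrt m) := by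
          calc 1 + Real.sqrt m + 2 * m / lam < A := hj
            _ ≤ B + |u j + v j| := hAB
            _ ≤ B + (1 + Real.sqrt m) := by linarith
        linarith
      have hsumj : u j^2 + v j^2 = A^2 + B^2 := by
        rcases le_total |u j| |v j| with h | h
        · rw [hA, hBdef, max_eq_right h, min_eq_left h, sq_abs, sq_abs]; ring
        · rw [hA, hBdef, max_eq_left h, min_eq_right h, sq_abs, sq_abs]
      have habsj : |u j| + |v j| = A + B := by
        rw [hA, hBdef]; exact (max_add_min _ _).symm
      have hsqrtj : Real.sqrt (u j^2 + v j^2) ≤ A + B/2 := by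
        rw [show A + B/2 = Real.sqrt ((A + B/2)^2) from (Real.sqrt_sq (by linarith)).symm]
        apply Real.sqrt_le_sqrt
        rw [hsumj]; nlinarith
      have hTsplit : T = (u j^2 + v j^2) + ∑ i ∈ univ.erase j, (u i^2 + v i^2) := by
        rw [hT, ← Finset.add_sum_erase _ _ (mem_univ j)]
      have hS1split : S1 = (|u j| + |v j|) + ∑ i ∈ univ.erase j, (|u i| + |v i|) := by
        rw [hS1, ← Finset.add_sum_erase _ _ (mem_univ j)]
      have hR : Real.sqrt (∑ i ∈ univ.erase j, (u i^2 + v i^2))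
          ≤ ∑ i ∈ univ.erase j, (|u i| + |v i|) := aux_sqrt_sum_le _ u v
      have hsplit : Real.sqrt T ≤ Real.sqrt (u j^2 + v j^2)
          + Real.sqrt (∑ i ∈ univ.erase j, (u i^2 + v i^2)) := by
        rw [hTsplit]
        exact aux_sqrt_add_le _ _ (by positivity)
          (Finset.sum_nonneg (fun i _ => by positivity))
      have hgap : m / lam < S1 - Real.sqrt T := by
        have h1 : Real.sqrt T ≤ (A + B/2) + ∑ i ∈ univ.erase j, (|u i| + |v i|) := by
          linarith
        have h2 : S1 - Real.sqrt T ≥ B/2 := by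
          rw [hS1split, habsj]; linarith
        have h3 : m / lam < B / 2 := by
          rw [div_lt_iff₀ hlam] at hBlb ⊢; linarith
        linarith
      have hfin : (m:ℝ) < lam * (S1 - Real.sqrt T) := by
        rw [div_lt_iff₀ hlam] at hgap
        calc (m:ℝ) < (S1 - Real.sqrt T) * lam := hgap
          _ = lam * (S1 - Real.sqrt T) := mul_comm _ _
      linarith
  · rw [hf]
    simp only [Prod.fst, Prod.snd, Pi.zero_apply]
    norm_num [Finset.sum_const, Finset.card_univ, Real.sqrt_zero]
end

section
/- Let m ≥ 1 and λ ∈ (0, 2). Define h : ℝ^m → ℝ by h(t) = Σ_{i=1}^m (t_i − 1)^2 + λ·(Σ_{i=1}^m t_i − √(Σ_{i=1}^m t_i^2)). Then the unique minimizer of h over {t ∈ ℝ^m : t ≥ 0} is t* with t*_i = c(λ) = (λ/√m − λ + 2)/2 for all i, and h(t*) = g*(λ) = λ·((1 − λ/4)·m + (λ/2 − 1)·√m − λ/4). That is, h(t) ≥ g*(λ) for all t ≥ 0, with equality if and only if t = t*. -/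
/-!
Write `S = ∑ tᵢ`, `N = √(∑ tᵢ²)`, `s = √m` and `b = s·c`, so that `2b = λ + (2 - λ)s` and
`g* = m - b²`. Expanding the squares gives the exact decomposition
`h(t) = g* + (N - b)² + (2 - λ)(sN - S)`, and `S ≤ sN` is Cauchy–Schwarz against the all-ones
vector, so both correction terms are nonnegative when `λ < 2`. They vanish exactly when `N = b`
and `S = sN = mc`, and then `∑ (tᵢ - c)² = N² - 2cS + mc² = 0`.
-/

open Finset Real

section SumsOfSquares

variable {ι : Type*} [Fintype ι]

theorem sum_le_sqrt_card_mul_sqrt_sum_sq (t : ι → ℝ) :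
    ∑ i, t i ≤ √(Fintype.card ι) * √(∑ i, t i ^ 2) := by
  simpa using Real.sum_mul_le_sqrt_mul_sqrt univ (fun _ => 1) t

theorem sum_sub_const_sq (t : ι → ℝ) (a : ℝ) :
    ∑ i, (t i - a) ^ 2 = ∑ i, t i ^ 2 - 2 * a * ∑ i, t i + Fintype.card ι * a ^ 2 := by
  simp only [sub_sq, sum_add_distrib, sum_sub_distrib, sum_const, card_univ, nsmul_eq_mul,
    mul_sum, mul_assoc, mul_comm (t _)]

theorem eq_of_sum_eq_of_sqrt_sum_sq_eq {t : ι → ℝ} {a : ℝ}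
    (hS : ∑ i, t i = Fintype.card ι * a) (hN : √(∑ i, t i ^ 2) = √(Fintype.card ι) * a)
    (i : ι) : t i = a := by
  have hQ : ∑ i, t i ^ 2 = Fintype.card ι * a ^ 2 := by
    rw [← sq_sqrt (sum_nonneg fun i _ => sq_nonneg (t i)), hN, mul_pow,
      sq_sqrt (Nat.cast_nonneg _)]
  have hzero : ∑ i, (t i - a) ^ 2 = 0 := by
    rw [sum_sub_const_sq, hQ, hS]
    ring
  have := (sum_eq_zero_iff_of_nonneg fun i _ => sq_nonneg (t i - a)).mp hzero i (mem_univ i)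
  linarith [pow_eq_zero_iff (n := 2) two_ne_zero |>.mp this]

theorem sum_sub_one_sq_add_mul_eq (t : ι → ℝ) (lam b : ℝ)
    (hb : 2 * b = lam + (2 - lam) * √(Fintype.card ι)) :
    ∑ i, (t i - 1) ^ 2 + lam * (∑ i, t i - √(∑ i, t i ^ 2)) =
      Fintype.card ι - b ^ 2 + (√(∑ i, t i ^ 2) - b) ^ 2
        + (2 - lam) * (√(Fintype.card ι) * √(∑ i, t i ^ 2) - ∑ i, t i) := by
  have hN := sq_sqrt (sum_nonneg fun i (_ : i ∈ univ) => sq_nonneg (t i))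
  rw [sum_sub_const_sq]
  linear_combination √(∑ i, t i ^ 2) * hb - hN

theorem card_sub_sq_le_sum_sub_one_sq_add_mul {lam b : ℝ} (hlam : lam ≤ 2)
    (hb : 2 * b = lam + (2 - lam) * √(Fintype.card ι)) (t : ι → ℝ) :
    Fintype.card ι - b ^ 2 ≤ ∑ i, (t i - 1) ^ 2 + lam * (∑ i, t i - √(∑ i, t i ^ 2)) := by
  rw [sum_sub_one_sq_add_mul_eq t lam b hb]
  nlinarith [sum_le_sqrt_card_mul_sqrt_sum_sq t, sq_nonneg (√(∑ i, t i ^ 2) - b)]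

theorem sum_sub_one_sq_add_mul_eq_card_sub_sq_iff {lam c : ℝ} (hlam : lam < 2)
    (hb : 2 * (√(Fintype.card ι) * c) = lam + (2 - lam) * √(Fintype.card ι)) (hc : 0 ≤ c)
    (t : ι → ℝ) :
    ∑ i, (t i - 1) ^ 2 + lam * (∑ i, t i - √(∑ i, t i ^ 2))
      = Fintype.card ι - (√(Fintype.card ι) * c) ^ 2 ↔ ∀ i, t i = c := by
  have hn := sq_sqrt (Nat.cast_nonneg (α := ℝ) (Fintype.card ι))
  rw [sum_sub_one_sq_add_mul_eq t lam _ hb]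
  constructor
  · intro heq
    have hCS := sum_le_sqrt_card_mul_sqrt_sum_sq t
    have hN : √(∑ i, t i ^ 2) = √(Fintype.card ι) * c := by
      nlinarith [sq_nonneg (√(∑ i, t i ^ 2) - √(Fintype.card ι) * c)]
    have hS : ∑ i, t i = √(Fintype.card ι) * √(∑ i, t i ^ 2) := by
      nlinarith [sq_nonneg (√(∑ i, t i ^ 2) - √(Fintype.card ι) * c)]
    refine eq_of_sum_eq_of_sqrt_sum_sq_eq ?_ hN
    rw [hS, hN, ← mul_assoc, ← sq, hn]
  · intro hconst
    obtain rfl : t = fun _ => c := funext hconst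
    have hN : √(∑ _ : ι, c ^ 2) = √(Fintype.card ι) * c := by
      rw [sum_const, card_univ, nsmul_eq_mul, sqrt_mul (Nat.cast_nonneg _), sqrt_sq hc]
    rw [hN]
    simp only [sum_const, card_univ, nsmul_eq_mul]
    linear_combination (2 - lam) * c * hn

end SumsOfSquares

theorem h_min_over_orthant_general (m : ℕ) (hm : 1 ≤ m) (lam : ℝ)
    (hlam2 : lam < 2)
    (c gstar : ℝ)
    (hc : c = (lam / Real.sqrt m - lam + 2) / 2)
    (hgstar : gstar = lam * ((1 - lam / 4) * m + (lam / 2 - 1) * Real.sqrt m - lam / 4))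
    (h : (Fin m → ℝ) → ℝ)
    (hh : ∀ t, h t = (∑ i, (t i - 1) ^ 2)
      + lam * ((∑ i, t i) - Real.sqrt (∑ i, t i ^ 2))) :
    (∀ t : Fin m → ℝ, (∀ i, 0 ≤ t i) → gstar ≤ h t) ∧
    (∀ t : Fin m → ℝ, (∀ i, 0 ≤ t i) → (h t = gstar ↔ ∀ i, t i = c)) := by
  have hs1 : 1 ≤ √(m : ℝ) := one_le_sqrt.mpr (by exact_mod_cast hm)
  have hs2 : √(m : ℝ) ^ 2 = m := sq_sqrt (Nat.cast_nonneg m)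
  have hb : 2 * (√m * c) = lam + (2 - lam) * √m := by
    rw [hc]
    field_simp
    ring
  have hc0 : 0 ≤ c := by
    nlinarith [mul_nonneg (sub_nonneg.mpr hlam2.le) (sub_nonneg.mpr hs1)]
  have hg : gstar = m - (√m * c) ^ 2 := by
    rw [hgstar]
    linear_combination ((√m * c + (lam + (2 - lam) * √m) / 2) / 2) * hb
      + ((2 - lam) ^ 2 / 4) * hs2
  refine ⟨fun t _ => ?_, fun t _ => ?_⟩
  · simpa [hh, hg] using card_sub_sq_le_sum_sub_one_sq_add_mul hlam2.le (by simpa using hb) t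
  · simpa [hh, hg] using
      sum_sub_one_sq_add_mul_eq_card_sub_sq_iff hlam2 (by simpa using hb) hc0 t

/-- For `λ ∈ (0,2)`, the unique minimizer of
`h(t) = ∑(tᵢ−1)² + λ(∑ tᵢ − √(∑ tᵢ²))` over `{t ≥ 0}` is the constant vector
`t* ≡ c(λ) = (λ/√m − λ + 2)/2`, with value `g*(λ) = λ((1−λ/4)m + (λ/2−1)√m − λ/4)`;
i.e., `h(t) ≥ g*(λ)` for all `t ≥ 0`, with equality iff `t = t*`. -/
theorem h_min_over_orthant (m : ℕ) (hm : 1 ≤ m) (lam : ℝ)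
    (hlam0 : 0 < lam) (hlam2 : lam < 2)
    (c gstar : ℝ)
    (hc : c = (lam / Real.sqrt m - lam + 2) / 2)
    (hgstar : gstar = lam * ((1 - lam / 4) * m + (lam / 2 - 1) * Real.sqrt m - lam / 4))
    (h : (Fin m → ℝ) → ℝ)
    (hh : ∀ t, h t = (∑ i, (t i - 1) ^ 2)
      + lam * ((∑ i, t i) - Real.sqrt (∑ i, t i ^ 2))) :
    (∀ t : Fin m → ℝ, (∀ i, 0 ≤ t i) → gstar ≤ h t) ∧
    (∀ t : Fin m → ℝ, (∀ i, 0 ≤ t i) → (h t = gstar ↔ ∀ i, t i = c)) :=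
  h_min_over_orthant_general m hm lam hlam2 c gstar hc hgstar h hh
end

section
/- Let m ≥ 1, a = (a_1,…,a_m) ∈ ℝ^m, and λ ∈ (0, 2). The partition problem for a is solvable if and only if there exist u, v ∈ ℝ^m with u ≥ 0, v ≥ 0, and (Σ_{i=1}^m a_i(u_i − v_i))^2 + Σ_{i=1}^m (u_i + v_i − 1)^2 + λ·(Σ_{i=1}^m (u_i + v_i) − √(Σ_{i=1}^m (u_i^2 + v_i^2))) = g*(λ) (equivalently, the infimum of this objective over the nonnegative orthant equals g*(λ)). -/
set_option maxHeartbeats 1000000 in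
/-- For `λ ∈ (0,2)`, the partition problem for `a` is solvable iff there
exist `u, v ≥ 0` with
`(∑ aᵢ(uᵢ−vᵢ))² + ∑(uᵢ+vᵢ−1)² + λ(∑(uᵢ+vᵢ) − √(∑(uᵢ²+vᵢ²))) = g*(λ)`. -/
theorem partition_iff_NUP_value (m : ℕ) (hm : 1 ≤ m) (a : Fin m → ℝ)
    (lam : ℝ) (hlam0 : 0 < lam) (hlam2 : lam < 2)
    (gstar : ℝ)
    (hgstar : gstar = lam * ((1 - lam / 4) * m + (lam / 2 - 1) * Real.sqrt m - lam / 4)) :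
    (∃ ε : Fin m → ℝ, (∀ i, ε i = 1 ∨ ε i = -1) ∧ ∑ i, ε i * a i = 0) ↔
    (∃ u v : Fin m → ℝ, (∀ i, 0 ≤ u i) ∧ (∀ i, 0 ≤ v i) ∧
      (∑ i, a i * (u i - v i)) ^ 2 + (∑ i, (u i + v i - 1) ^ 2)
        + lam * ((∑ i, (u i + v i)) - Real.sqrt (∑ i, (u i ^ 2 + v i ^ 2)))
        = gstar) := by
  have hm1 : (1:ℝ) ≤ (m:ℝ) := by exact_mod_cast hm
  have hm0 : (0:ℝ) < (m:ℝ) := by linarith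
  set sm := Real.sqrt (m:ℝ) with hsmdef
  have hsm1 : 1 ≤ sm := by
    rw [hsmdef, show (1:ℝ) = Real.sqrt 1 by simp]
    exact Real.sqrt_le_sqrt hm1
  have hsm0 : 0 < sm := lt_of_lt_of_le one_pos hsm1
  have hsm2 : sm ^ 2 = (m:ℝ) := Real.sq_sqrt (le_of_lt hm0)
  constructor
  · rintro ⟨ε, hε, hsum⟩
    set t : ℝ := 1 - lam / 2 + lam / (2 * sm) with htdef
    have ht0 : 0 < t := by
      have h1 : 0 < lam / (2 * sm) := by positivity
      have h2 : lam / 2 < 1 := by linarith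
      rw [htdef]; linarith
    refine ⟨fun i => if ε i = 1 then t else 0, fun i => if ε i = 1 then 0 else t,
      fun i => by dsimp only; split <;> simp [ht0.le],
      fun i => by dsimp only; split <;> simp [ht0.le], ?_⟩
    have e1 : ∑ i, a i * ((if ε i = 1 then t else 0) - (if ε i = 1 then 0 else t)) = 0 := by
      have h1 : ∀ i : Fin m,
          a i * ((if ε i = 1 then t else 0) - (if ε i = 1 then 0 else t)) = (ε i * a i) * t := by
        intro i
        rcases hε i with h | h <;> rw [h] <;> norm_num
      simp_rw [h1, ← Finset.sum_mul, hsum, zero_mul]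
    have e2 : ∑ i, ((if ε i = 1 then t else 0) + (if ε i = 1 then 0 else t) - 1) ^ 2
        = (m:ℝ) * (t - 1) ^ 2 := by
      have h2 : ∀ i : Fin m,
          ((if ε i = 1 then t else 0) + (if ε i = 1 then 0 else t) - 1) ^ 2 = (t - 1)^2 := by
        intro i; split <;> ring
      simp_rw [h2, Finset.sum_const, Finset.card_univ, Fintype.card_fin, nsmul_eq_mul]
    have e3 : ∑ i, ((if ε i = 1 then t else 0) + (if ε i = 1 then 0 else t)) = (m:ℝ) * t := by
      have h3 : ∀ i : Fin m,
          ((if ε i = 1 then t else 0) + (if ε i = 1 then 0 else t)) = t := by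
        intro i; split <;> ring
      simp_rw [h3, Finset.sum_const, Finset.card_univ, Fintype.card_fin, nsmul_eq_mul]
    have e4 : ∑ i, ((if ε i = 1 then t else 0) ^ 2 + (if ε i = 1 then 0 else t) ^ 2)
        = (m:ℝ) * t ^ 2 := by
      have h4 : ∀ i : Fin m,
          ((if ε i = 1 then t else 0) ^ 2 + (if ε i = 1 then 0 else t) ^ 2) = t ^ 2 := by
        intro i; split <;> ring
      simp_rw [h4, Finset.sum_const, Finset.card_univ, Fintype.card_fin, nsmul_eq_mul]
    rw [e1, e2, e3, e4]
    have e5 : Real.sqrt ((m:ℝ) * t ^ 2) = sm * t := by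
      rw [Real.sqrt_mul (le_of_lt hm0), Real.sqrt_sq ht0.le]
    rw [e5, hgstar, ← hsm2, htdef]
    field_simp
    ring
  · rintro ⟨u, v, hu, hv, hF⟩
    set A := ∑ i, a i * (u i - v i) with hAdef
    set S := ∑ i, (u i + v i) with hSdef
    set T := ∑ i, (u i ^ 2 + v i ^ 2) with hTdef
    set P := ∑ i, u i * v i with hPdef
    have hP0 : 0 ≤ P := Finset.sum_nonneg fun i _ => mul_nonneg (hu i) (hv i)
    have hT0 : 0 ≤ T := Finset.sum_nonneg fun i _ => by positivity
    set T2 := ∑ i, (u i + v i) ^ 2 with hT2def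
    have hT20 : 0 ≤ T2 := Finset.sum_nonneg fun i _ => sq_nonneg _
    have hT2 : T2 = T + 2 * P := by
      have h : ∀ i : Fin m, (u i + v i) ^ 2 = (u i ^ 2 + v i ^ 2) + 2 * (u i * v i) :=
        fun i => by ring
      rw [hT2def]
      simp_rw [h]
      rw [Finset.sum_add_distrib, ← Finset.mul_sum, ← hTdef, ← hPdef]
    set R := Real.sqrt T with hRdef
    set Q := Real.sqrt T2 with hQdef
    have hQ2 : Q ^ 2 = T2 := Real.sq_sqrt hT20
    have hR2 : R ^ 2 = T := Real.sq_sqrt hT0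
    have hQ0 : 0 ≤ Q := Real.sqrt_nonneg _
    have hR0 : 0 ≤ R := Real.sqrt_nonneg _
    have hRQ : R ≤ Q := Real.sqrt_le_sqrt (by linarith)
    have hS0 : 0 ≤ S := Finset.sum_nonneg fun i _ => add_nonneg (hu i) (hv i)
    clear_value sm A S T P T2 R Q
    -- Cauchy–Schwarz via explicit variance identity
    have hD' : ∑ i, ((m:ℝ) * (u i + v i) - S) ^ 2 = (m:ℝ) ^ 2 * T2 - (m:ℝ) * S ^ 2 := by
      have h : ∀ i : Fin m, ((m:ℝ) * (u i + v i) - S) ^ 2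
          = (m:ℝ) ^ 2 * (u i + v i) ^ 2 - 2 * (m:ℝ) * S * (u i + v i) + S ^ 2 :=
        fun i => by ring
      simp_rw [h]
      rw [Finset.sum_add_distrib, Finset.sum_sub_distrib, ← Finset.mul_sum, ← Finset.mul_sum,
        ← hT2def, ← hSdef, Finset.sum_const, Finset.card_univ, Fintype.card_fin, nsmul_eq_mul]
      ring
    have hD0 : 0 ≤ ∑ i, ((m:ℝ) * (u i + v i) - S) ^ 2 :=
      Finset.sum_nonneg fun i _ => sq_nonneg _
    have hS2 : S ^ 2 ≤ (m:ℝ) * T2 := by nlinarith [hD', hD0]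
    have hSQ : S ≤ sm * Q := by
      have h1 : S ^ 2 ≤ (sm * Q) ^ 2 := by rw [mul_pow, hsm2, hQ2]; exact hS2
      have h2 := Real.sqrt_le_sqrt h1
      rwa [Real.sqrt_sq hS0, Real.sqrt_sq (by positivity)] at h2
    -- sum expansion
    have hsum1 : ∑ i, (u i + v i - 1) ^ 2 = T2 - 2 * S + (m:ℝ) := by
      have h : ∀ i : Fin m, (u i + v i - 1) ^ 2 = (u i + v i) ^ 2 - 2 * (u i + v i) + 1 :=
        fun i => by ring
      simp_rw [h]
      rw [Finset.sum_add_distrib, Finset.sum_sub_distrib, ← Finset.mul_sum,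
        ← hT2def, ← hSdef, Finset.sum_const, Finset.card_univ, Fintype.card_fin, nsmul_eq_mul]
      ring
    rw [hsum1, hgstar, ← hsm2] at hF
    set rst := (lam + (2 - lam) * sm) / 2 with hrstdef
    clear_value rst
    have hkey : A ^ 2 + lam * (Q - R) + (Q - rst) ^ 2 + (2 - lam) * (sm * Q - S) = 0 := by
      rw [hrstdef]
      linear_combination hF + hQ2
    have t1 : 0 ≤ A ^ 2 := sq_nonneg _
    have t2 : 0 ≤ lam * (Q - R) := mul_nonneg hlam0.le (by linarith)
    have t3 : 0 ≤ (Q - rst) ^ 2 := sq_nonneg _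
    have t4 : 0 ≤ (2 - lam) * (sm * Q - S) := mul_nonneg (by linarith) (by linarith)
    have hA0 : A = 0 := by
      have h : A ^ 2 = 0 := by linarith
      exact pow_eq_zero_iff two_ne_zero |>.mp h
    have hQR : Q = R := by
      have h : lam * (Q - R) = 0 := by linarith
      rcases mul_eq_zero.mp h with h' | h'
      · exact absurd h' (ne_of_gt hlam0)
      · linarith
    have hQr : Q = rst := by
      have h : (Q - rst) ^ 2 = 0 := by linarith
      have := pow_eq_zero_iff two_ne_zero |>.mp h
      linarith
    have hSQe : S = sm * Q := by
      have h : (2 - lam) * (sm * Q - S) = 0 := by linarith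
      rcases mul_eq_zero.mp h with h' | h'
      · exfalso; linarith
      · linarith
    have hPz : P = 0 := by
      have h : T + 2 * P = T := by rw [← hT2, ← hQ2, hQR, hR2]
      linarith
    have huv0 : ∀ i : Fin m, u i * v i = 0 := by
      intro i
      have h := (Finset.sum_eq_zero_iff_of_nonneg
        (fun j _ => mul_nonneg (hu j) (hv j))).mp (hPdef ▸ hPz)
      exact h i (Finset.mem_univ i)
    have hQpos : 0 < Q := by
      rw [hQr, hrstdef]
      have : 0 < (2 - lam) * sm := mul_pos (by linarith) hsm0
      linarith
    have hSpos : 0 < S := by rw [hSQe]; exact mul_pos hsm0 hQpos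
    have hst : ∀ i : Fin m, u i + v i = S / (m:ℝ) := by
      have hzero : ∑ i, ((m:ℝ) * (u i + v i) - S) ^ 2 = 0 := by
        rw [hD']
        have hSsq : S ^ 2 = (m:ℝ) * T2 := by rw [hSQe, mul_pow, hsm2, hQ2]
        linear_combination (-(m:ℝ)) * hSsq
      intro i
      have h := (Finset.sum_eq_zero_iff_of_nonneg (fun j _ => sq_nonneg _)).mp hzero i
        (Finset.mem_univ i)
      have h2 : (m:ℝ) * (u i + v i) - S = 0 := pow_eq_zero_iff two_ne_zero |>.mp h
      rw [eq_div_iff (ne_of_gt hm0)]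
      linarith
    set t := S / (m:ℝ) with htdef
    have ht0 : 0 < t := div_pos hSpos hm0
    clear_value t
    refine ⟨fun i => if u i = 0 then (-1:ℝ) else 1, fun i => by dsimp only; split <;> simp, ?_⟩
    have heps : ∀ i : Fin m, u i - v i = (if u i = 0 then (-1:ℝ) else 1) * t := by
      intro i
      by_cases h : u i = 0
      · have hvi : v i = t := by have := hst i; rw [h] at this; linarith
        simp [h, hvi]
      · have hvi : v i = 0 := by
          rcases mul_eq_zero.mp (huv0 i) with h' | h'
          · exact absurd h' h
          · exact h'
        have hui : u i = t := by have := hst i; rw [hvi] at this; linarith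
        simp [hvi, hui, ht0.ne']
    have hmain : (∑ i, (if u i = 0 then (-1:ℝ) else 1) * a i) * t = 0 := by
      rw [Finset.sum_mul]
      have : ∀ i ∈ Finset.univ, (if u i = 0 then (-1:ℝ) else 1) * a i * t
          = a i * (u i - v i) := by
        intro i _
        rw [heps i]; ring
      rw [Finset.sum_congr rfl this, ← hAdef, hA0]
    exact (mul_eq_zero.mp hmain).resolve_right (ne_of_gt ht0)
end

section
/- Let m ≥ 1, a = (a_1,…,a_m) ∈ ℝ^m, and λ ∈ (0, 2). The partition problem for a is solvable if and only if there exist u, v ∈ ℝ^m with (Σ_{i=1}^m a_i(u_i − v_i))^2 + Σ_{i=1}^m (u_i + v_i − 1)^2 + λ·(Σ_{i=1}^m (|u_i| + |v_i|) − √(Σ_{i=1}^m (u_i^2 + v_i^2))) = g*(λ) (equivalently, the infimum of this objective over ℝ^m × ℝ^m equals g*(λ)). -/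
/-!
Write `s = u + v`, `c = √m`, `t = 1 - λ/2 + λ/(2c)` and `μ = λ/(2ct) ∈ (0, 1)`. Completing squares
(and `λ‖s‖₂ ≤ μ(‖s‖₂² + (ct)²)`, AM-GM) splits the objective as
`m(1 - t²) + (∑ aᵢ(uᵢ - vᵢ))² + (1 - μ) ∑ (sᵢ - t)² + μ(‖s‖₂ - ct)² + λδ`, where
`δ = (‖(u, v)‖₁ - ‖(u, v)‖₂) - (∑ sᵢ - ‖s‖₂) ≥ 0`: the function `∑ xᵢ - ‖x‖₂` only grows when the
coordinates grow (here from `s` to `(|uᵢ| + |vᵢ|)ᵢ`), and `‖(u, v)‖₂ ≤ ‖(|uᵢ| + |vᵢ|)ᵢ‖₂` with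
equality iff `uᵢvᵢ = 0` for all `i`. So `g*(λ) = m(1 - t²)` is the minimum, attained exactly when
`∑ aᵢ(uᵢ - vᵢ) = 0`, `uᵢ + vᵢ = t` and `uᵢvᵢ = 0`, i.e. when `((uᵢ - vᵢ)/t)ᵢ` is a sign vector
solving the partition problem.
-/

open Finset Real

section

variable {ι : Type*} [Fintype ι]

theorem sqrt_sum_sq_le_sqrt_sum_sq_add_sum_sub {p s : ι → ℝ} (hsp : ∀ i, s i ≤ p i) :
    √(∑ i, p i ^ 2) ≤ √(∑ i, s i ^ 2) + ∑ i, (p i - s i) := by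
  set N := √(∑ i, s i ^ 2)
  set D := ∑ i, (p i - s i)
  have hsN : ∀ i, s i ≤ N := fun i =>
    (le_abs_self _).trans (abs_le_sqrt (single_le_sum (fun j _ => sq_nonneg (s j)) (mem_univ i)))
  have hD : ∀ i, p i - s i ≤ D := fun i =>
    single_le_sum (fun j _ => sub_nonneg.2 (hsp j)) (mem_univ i)
  rw [sqrt_le_left (add_nonneg (sqrt_nonneg _) (sum_nonneg fun i _ => sub_nonneg.2 (hsp i)))]
  -- `p² - s² = (p - s)(p + s)` and `p + s ≤ 2N + D` coordinatewise
  calc ∑ i, p i ^ 2 ≤ ∑ i, (s i ^ 2 + (2 * N + D) * (p i - s i)) :=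
        sum_le_sum fun i _ => by nlinarith [hsN i, hD i, hsp i]
    _ = (N + D) ^ 2 := by
        rw [sum_add_distrib, ← mul_sum, ← sq_sqrt (sum_nonneg fun i _ => sq_nonneg (s i))]
        ring

theorem sq_add_sq_le_sq_abs_add_abs (x y : ℝ) : x ^ 2 + y ^ 2 ≤ (|x| + |y|) ^ 2 := by
  nlinarith [sq_abs x, sq_abs y, mul_nonneg (abs_nonneg x) (abs_nonneg y)]

theorem sqrt_sum_sq_abs_add_abs_le (u v : ι → ℝ) :
    √(∑ i, (|u i| + |v i|) ^ 2) ≤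
      √(∑ i, (u i + v i) ^ 2) + (∑ i, (|u i| + |v i|) - ∑ i, (u i + v i)) := by
  rw [← sum_sub_distrib]
  exact sqrt_sum_sq_le_sqrt_sum_sq_add_sum_sub fun i => add_le_add (le_abs_self _) (le_abs_self _)

theorem sum_add_sub_sqrt_le_sum_abs_add_abs_sub_sqrt (u v : ι → ℝ) :
    ∑ i, (u i + v i) - √(∑ i, (u i + v i) ^ 2) ≤
      ∑ i, (|u i| + |v i|) - √(∑ i, (u i ^ 2 + v i ^ 2)) := by
  have := sqrt_le_sqrt (sum_le_sum fun i (_ : i ∈ univ) => sq_add_sq_le_sq_abs_add_abs (u i) (v i))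
  linarith [sqrt_sum_sq_abs_add_abs_le u v]

theorem mul_eq_zero_of_sum_abs_add_abs_sub_sqrt_le {u v : ι → ℝ}
    (h : ∑ i, (|u i| + |v i|) - √(∑ i, (u i ^ 2 + v i ^ 2)) ≤
      ∑ i, (u i + v i) - √(∑ i, (u i + v i) ^ 2)) (i : ι) :
    u i * v i = 0 := by
  have hpt : ∀ i ∈ univ, u i ^ 2 + v i ^ 2 ≤ (|u i| + |v i|) ^ 2 := fun i _ =>
    sq_add_sq_le_sq_abs_add_abs (u i) (v i)
  have hsq : ∑ i, (u i ^ 2 + v i ^ 2) = ∑ i, (|u i| + |v i|) ^ 2 :=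
    le_antisymm (sum_le_sum hpt) ((sqrt_le_sqrt_iff (sum_nonneg fun i _ => by positivity)).1
      (by linarith [sqrt_sum_sq_abs_add_abs_le u v]))
  have hi := (sum_eq_sum_iff_of_le hpt).1 hsq i (mem_univ i)
  rw [← abs_eq_zero, abs_mul]
  nlinarith [sq_abs (u i), sq_abs (v i)]

theorem sum_sq_sub_one_add_mul_sum_sub_sqrt_eq {lam c t μ : ℝ} (s : ι → ℝ)
    (hc : c ^ 2 = Fintype.card ι) (hlam : lam = 2 * μ * c * t) (ht : (1 - μ) * t = 1 - lam / 2) :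
    ∑ i, (s i - 1) ^ 2 + lam * (∑ i, s i - √(∑ i, s i ^ 2)) =
      Fintype.card ι * (1 - t ^ 2) + (1 - μ) * ∑ i, (s i - t) ^ 2
        + μ * (√(∑ i, s i ^ 2) - c * t) ^ 2 := by
  have hN := sq_sqrt (sum_nonneg fun i (_ : i ∈ univ) => sq_nonneg (s i))
  simp only [sub_sq, sum_add_distrib, sum_sub_distrib, ← sum_mul, ← mul_sum, sum_const, card_univ,
    nsmul_eq_mul] at hN ⊢
  linear_combination (-μ) * hN - μ * t ^ 2 * hc - √(∑ i, s i ^ 2) * hlam + 2 * (∑ i, s i) * ht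

noncomputable def upObjective (a : ι → ℝ) (lam : ℝ) (u v : ι → ℝ) : ℝ :=
  (∑ i, a i * (u i - v i)) ^ 2 + (∑ i, (u i + v i - 1) ^ 2)
    + lam * ((∑ i, (|u i| + |v i|)) - √(∑ i, (u i ^ 2 + v i ^ 2)))

theorem upObjective_eq {lam c t μ : ℝ} (a u v : ι → ℝ)
    (hc : c ^ 2 = Fintype.card ι) (hlam : lam = 2 * μ * c * t) (ht : (1 - μ) * t = 1 - lam / 2) :
    upObjective a lam u v =
      Fintype.card ι * (1 - t ^ 2) + (∑ i, a i * (u i - v i)) ^ 2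
        + (1 - μ) * ∑ i, (u i + v i - t) ^ 2 + μ * (√(∑ i, (u i + v i) ^ 2) - c * t) ^ 2
        + lam * ((∑ i, (|u i| + |v i|) - √(∑ i, (u i ^ 2 + v i ^ 2)))
          - (∑ i, (u i + v i) - √(∑ i, (u i + v i) ^ 2))) := by
  rw [upObjective]
  linear_combination sum_sq_sub_one_add_mul_sum_sub_sqrt_eq (fun i => u i + v i) hc hlam ht

theorem upObjective_eq_iff {lam c t μ : ℝ} {a u v : ι → ℝ}
    (hc : c ^ 2 = Fintype.card ι) (hlam : lam = 2 * μ * c * t) (ht : (1 - μ) * t = 1 - lam / 2)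
    (hc0 : 0 ≤ c) (ht0 : 0 ≤ t) (hlam0 : 0 < lam) (hμ0 : 0 ≤ μ) (hμ1 : μ < 1) :
    upObjective a lam u v = Fintype.card ι * (1 - t ^ 2) ↔
      ∑ i, a i * (u i - v i) = 0 ∧ ∀ i, u i + v i = t ∧ u i * v i = 0 := by
  rw [upObjective_eq a u v hc hlam ht]
  constructor
  · intro h
    have hS2 := sq_nonneg (∑ i, a i * (u i - v i))
    have hdist := sum_nonneg fun i (_ : i ∈ univ) => sq_nonneg (u i + v i - t)
    have hnorm := mul_nonneg hμ0 (sq_nonneg (√(∑ i, (u i + v i) ^ 2) - c * t))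
    have hgap := sub_nonneg.2 (sum_add_sub_sqrt_le_sum_abs_add_abs_sub_sqrt u v)
    have hdist0 : ∑ i, (u i + v i - t) ^ 2 = 0 := by
      nlinarith [mul_nonneg hlam0.le hgap, mul_nonneg (sub_nonneg.2 hμ1.le) hdist]
    refine ⟨pow_eq_zero_iff two_ne_zero |>.1 (by nlinarith), fun i => ⟨?_, ?_⟩⟩
    · have := (sum_eq_zero_iff_of_nonneg fun j _ => sq_nonneg (u j + v j - t)).1 hdist0 i
        (mem_univ i)
      linarith [pow_eq_zero_iff two_ne_zero |>.1 this]
    · refine mul_eq_zero_of_sum_abs_add_abs_sub_sqrt_le (sub_nonpos.1 ?_) i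
      nlinarith
  · rintro ⟨hS, hsplit⟩
    have hs : ∀ i, u i + v i = t := fun i => (hsplit i).1
    have habs : ∀ i, |u i| + |v i| = t := fun i => by
      have : |u i| + |v i| = |u i + v i| := by
        rcases mul_eq_zero.1 (hsplit i).2 with h | h <;> simp [h]
      rw [this, hs i, abs_of_nonneg ht0]
    have hsq : ∀ i, u i ^ 2 + v i ^ 2 = t ^ 2 := fun i => by
      rw [← hs i]; linear_combination -2 * (hsplit i).2
    have hnorm : √(∑ _i : ι, t ^ 2) = c * t := by
      rw [sum_const, card_univ, nsmul_eq_mul, ← hc, ← mul_pow, sqrt_sq (mul_nonneg hc0 ht0)]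
    simp only [hS, hs, habs, hsq, hnorm, sub_self, ne_eq, OfNat.ofNat_ne_zero, not_false_eq_true,
      zero_pow, sum_const_zero]
    ring

theorem exists_signs_iff_exists_split {a : ι → ℝ} {t : ℝ} (ht : t ≠ 0) :
    (∃ ε : ι → ℝ, (∀ i, ε i = 1 ∨ ε i = -1) ∧ ∑ i, ε i * a i = 0) ↔
      ∃ u v : ι → ℝ, ∑ i, a i * (u i - v i) = 0 ∧ ∀ i, u i + v i = t ∧ u i * v i = 0 := by
  constructor
  · rintro ⟨ε, hε, hεa⟩
    refine ⟨fun i => t * (1 + ε i) / 2, fun i => t * (1 - ε i) / 2, ?_, fun i => ⟨by ring, ?_⟩⟩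
    · rw [← mul_zero t, ← hεa, mul_sum]
      exact sum_congr rfl fun i _ => by ring
    · rcases hε i with h | h <;> simp only [h] <;> ring
  · rintro ⟨u, v, hS, hsplit⟩
    refine ⟨fun i => (u i - v i) / t, fun i => sq_eq_one_iff.1 ?_, ?_⟩
    · -- `(u - v)² = (u + v)² - 4uv`
      rw [div_pow, div_eq_one_iff_eq (pow_ne_zero 2 ht), ← (hsplit i).1]
      linear_combination -4 * (hsplit i).2
    · rw [← zero_div t, ← hS, sum_div]
      exact sum_congr rfl fun i _ => by ring

end

/-- For `λ ∈ (0,2)`, the partition problem for `a` is solvable iff there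
exist `u, v ∈ ℝᵐ` with
`(∑ aᵢ(uᵢ−vᵢ))² + ∑(uᵢ+vᵢ−1)² + λ(∑(|uᵢ|+|vᵢ|) − √(∑(uᵢ²+vᵢ²))) = g*(λ)`. -/
theorem partition_iff_UP_value (m : ℕ) (hm : 1 ≤ m) (a : Fin m → ℝ)
    (lam : ℝ) (hlam0 : 0 < lam) (hlam2 : lam < 2)
    (gstar : ℝ)
    (hgstar : gstar = lam * ((1 - lam / 4) * m + (lam / 2 - 1) * Real.sqrt m - lam / 4)) :
    (∃ ε : Fin m → ℝ, (∀ i, ε i = 1 ∨ ε i = -1) ∧ ∑ i, ε i * a i = 0) ↔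
    (∃ u v : Fin m → ℝ,
      (∑ i, a i * (u i - v i)) ^ 2 + (∑ i, (u i + v i - 1) ^ 2)
        + lam * ((∑ i, (|u i| + |v i|)) - Real.sqrt (∑ i, (u i ^ 2 + v i ^ 2)))
        = gstar) := by
  have hm0 : (0 : ℝ) < m := Nat.cast_pos.2 hm
  set c := √(m : ℝ)
  have hc0 : 0 < c := sqrt_pos.2 hm0
  have hcm : c ^ 2 = m := sq_sqrt hm0.le
  have hc : c ^ 2 = Fintype.card (Fin m) := by rw [Fintype.card_fin, hcm]
  set t := 1 - lam / 2 + lam / (2 * c) with ht_def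
  have ht0 : 0 < t := by have := div_pos hlam0 (mul_pos two_pos hc0); linarith
  set μ := lam / (2 * c * t) with hμ_def
  have hlam : lam = 2 * μ * c * t := by rw [hμ_def]; field_simp
  have ht : (1 - μ) * t = 1 - lam / 2 := by
    have hμt : μ * t = lam / (2 * c) := by rw [hμ_def]; field_simp
    linear_combination ht_def - hμt
  have hμ1 : μ < 1 := by
    have : 2 * c * t = lam + (2 - lam) * c := by rw [ht_def]; field_simp; ring
    rw [div_lt_one (by positivity)]
    nlinarith
  have hg : gstar = Fintype.card (Fin m) * (1 - t ^ 2) := by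
    rw [hgstar, Fintype.card_fin, ← hcm, ht_def]; field_simp; ring
  rw [hg, exists_signs_iff_exists_split ht0.ne']
  exact exists₂_congr fun u v =>
    (upObjective_eq_iff hc hlam ht hc0.le ht0.le hlam0 (by positivity) hμ1).symm
end

section
/- Let m ≥ 1, λ > 0, and define g(u,v) = Σ_{i=1}^m (u_i + v_i − 1)^2 + λ·(Σ_{i=1}^m (|u_i| + |v_i|) − √(Σ_{i=1}^m (u_i^2 + v_i^2))) on ℝ^m × ℝ^m. If (u, v) satisfies u_i + v_i < 0 for some i ∈ [m], then the pair (ũ, ṽ) obtained from (u, v) by replacing (u_i, v_i) with (−u_i, −v_i) satisfies g(ũ, ṽ) < g(u, v); in particular, (u, v) is not a global minimizer of g. -/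
/-- If `uᵢ + vᵢ < 0` for some `i`, then flipping the signs of `uᵢ` and
`vᵢ` strictly decreases `g(u,v) = ∑(uᵢ+vᵢ−1)² + λ(∑(|uᵢ|+|vᵢ|) − √(∑(uᵢ²+vᵢ²)))`;
in particular `(u,v)` is not a global minimizer of `g`. -/
theorem flip_sign_improves (m : ℕ) (hm : 1 ≤ m) (lam : ℝ) (hlam : 0 < lam)
    (g : (Fin m → ℝ) → (Fin m → ℝ) → ℝ)
    (hg : ∀ u v, g u v = (∑ i, (u i + v i - 1) ^ 2)
      + lam * ((∑ i, (|u i| + |v i|)) - Real.sqrt (∑ i, (u i ^ 2 + v i ^ 2))))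
    (u v : Fin m → ℝ) (i : Fin m) (hi : u i + v i < 0) :
    g (Function.update u i (-u i)) (Function.update v i (-v i)) < g u v ∧
    ¬ (∀ u' v' : Fin m → ℝ, g u v ≤ g u' v') := by
  have key : ∀ (f f' : Fin m → ℝ), (∀ j, j ≠ i → f' j = f j) →
      ∑ j, f' j = (∑ j, f j) + (f' i - f i) := by
    intro f f' h
    have hf' : f' = Function.update f i (f' i) := by
      funext j
      by_cases hj : j = i
      · subst hj; simp
      · simp [Function.update_of_ne hj, h j hj]
    rw [hf', Finset.sum_update_of_mem (Finset.mem_univ i),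
      ← Finset.sum_erase_add _ f (Finset.mem_univ i)]
    simp [Finset.sdiff_singleton_eq_erase, Function.update_self]
    ring
  set u' := Function.update u i (-u i) with hu'
  set v' := Function.update v i (-v i) with hv'
  have hne : ∀ j, j ≠ i → u' j = u j ∧ v' j = v j := by
    intro j hj
    simp [hu', hv', Function.update_of_ne hj]
  have hui : u' i = -u i := by simp [hu']
  have hvi : v' i = -v i := by simp [hv']
  have h1 : ∑ j, (u' j + v' j - 1) ^ 2
      = (∑ j, (u j + v j - 1) ^ 2) + ((-u i + -v i - 1) ^ 2 - (u i + v i - 1) ^ 2) := by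
    have := key (fun j => (u j + v j - 1) ^ 2) (fun j => (u' j + v' j - 1) ^ 2)
      (by intro j hj; simp [(hne j hj).1, (hne j hj).2])
    simpa [hui, hvi] using this
  have h2 : ∑ j, (|u' j| + |v' j|) = ∑ j, (|u j| + |v j|) := by
    have := key (fun j => |u j| + |v j|) (fun j => |u' j| + |v' j|)
      (by intro j hj; simp [(hne j hj).1, (hne j hj).2])
    simpa [hui, hvi, abs_neg] using this
  have h3 : ∑ j, (u' j ^ 2 + v' j ^ 2) = ∑ j, (u j ^ 2 + v j ^ 2) := by
    have := key (fun j => u j ^ 2 + v j ^ 2) (fun j => u' j ^ 2 + v' j ^ 2)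
      (by intro j hj; simp [(hne j hj).1, (hne j hj).2])
    simpa [hui, hvi] using this
  have hlt : g u' v' < g u v := by
    rw [hg u' v', hg u v, h1, h2, h3]
    nlinarith [sq_nonneg (u i + v i)]
  exact ⟨hlt, fun h => absurd (h u' v') (not_le.2 hlt)⟩
end

section
/- Let m ≥ 1, λ ∈ (0, 2), and define g(u,v) = Σ_{i=1}^m (u_i + v_i − 1)^2 + λ·(Σ_{i=1}^m (|u_i| + |v_i|) − √(Σ_{i=1}^m (u_i^2 + v_i^2))) on ℝ^m × ℝ^m. If (u, v) satisfies u_i = v_i = 0 for some i ∈ [m], then the pair (ũ, ṽ) obtained from (u, v) by replacing (u_i, v_i) with (1 − λ/2, 0) satisfies g(ũ, ṽ) < g(u, v); in particular, (u, v) is not a global minimizer of g. -/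
/-- For `λ ∈ (0,2)`, if `uᵢ = vᵢ = 0` for some `i`, then replacing
`(uᵢ, vᵢ)` by `(1 − λ/2, 0)` strictly decreases
`g(u,v) = ∑(uᵢ+vᵢ−1)² + λ(∑(|uᵢ|+|vᵢ|) − √(∑(uᵢ²+vᵢ²)))`;
in particular `(u,v)` is not a global minimizer of `g`. -/
theorem fill_zero_improves (m : ℕ) (hm : 1 ≤ m) (lam : ℝ)
    (hlam0 : 0 < lam) (hlam2 : lam < 2)
    (g : (Fin m → ℝ) → (Fin m → ℝ) → ℝ)
    (hg : ∀ u v, g u v = (∑ i, (u i + v i - 1) ^ 2)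
      + lam * ((∑ i, (|u i| + |v i|)) - Real.sqrt (∑ i, (u i ^ 2 + v i ^ 2))))
    (u v : Fin m → ℝ) (i : Fin m) (hu : u i = 0) (hv : v i = 0) :
    g (Function.update u i (1 - lam / 2)) (Function.update v i 0) < g u v ∧
    ¬ (∀ u' v' : Fin m → ℝ, g u v ≤ g u' v') := by
  set a : ℝ := 1 - lam / 2 with ha
  have ha0 : 0 < a := by simp [ha]; linarith
  set u' := Function.update u i a
  set v' := Function.update v i (0 : ℝ)
  have key : ∀ F : ℝ → ℝ → ℝ,
      (∑ j, F (u' j) (v' j)) = (∑ j ∈ Finset.univ.erase i, F (u j) (v j)) + F a 0 := by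
    intro F
    rw [← Finset.sum_erase_add _ _ (Finset.mem_univ i)]
    congr 1
    · exact Finset.sum_congr rfl fun j hj => by
        simp [u', v', Function.update_of_ne (Finset.ne_of_mem_erase hj)]
    · simp [u', v']
  have key' : ∀ F : ℝ → ℝ → ℝ,
      (∑ j, F (u j) (v j)) = (∑ j ∈ Finset.univ.erase i, F (u j) (v j)) + F 0 0 := by
    intro F
    rw [← Finset.sum_erase_add _ _ (Finset.mem_univ i)]
    congr 1
    rw [hu, hv]
  set Q : ℝ := ∑ j ∈ Finset.univ.erase i, (u j ^ 2 + v j ^ 2) with hQ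
  have hQ0 : 0 ≤ Q := Finset.sum_nonneg fun j _ => by positivity
  have hlt : g u' v' < g u v := by
    rw [hg, hg, key (fun x y => (x + y - 1) ^ 2), key (fun x y => |x| + |y|),
      key (fun x y => x ^ 2 + y ^ 2), key' (fun x y => (x + y - 1) ^ 2),
      key' (fun x y => |x| + |y|), key' (fun x y => x ^ 2 + y ^ 2)]
    have hsq : Real.sqrt (Q + ((0:ℝ) ^ 2 + 0 ^ 2)) ≤ Real.sqrt (Q + (a ^ 2 + 0 ^ 2)) :=
      Real.sqrt_le_sqrt (by nlinarith)
    rw [abs_of_pos ha0, ← hQ]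
    simp only [abs_zero, add_zero]
    have h1 : lam * Real.sqrt (Q + ((0:ℝ) ^ 2 + 0 ^ 2)) ≤ lam * Real.sqrt (Q + (a ^ 2 + 0 ^ 2)) :=
      mul_le_mul_of_nonneg_left hsq hlam0.le
    have h2 : (a - 1) ^ 2 + lam * a + a ^ 2 = 1 := by rw [ha]; ring
    have h3 : 0 < a ^ 2 := pow_pos ha0 2
    linarith
  exact ⟨hlt, fun h => absurd (h u' v') (not_le.2 hlt)⟩
end

section
/- Let m ≥ 1, λ > 0, and define g(u,v) = Σ_{i=1}^m (u_i + v_i − 1)^2 + λ·(Σ_{i=1}^m (|u_i| + |v_i|) − √(Σ_{i=1}^m (u_i^2 + v_i^2))) on ℝ^m × ℝ^m. If (u, v) satisfies u_i > 0 and v_i > 0 for some i ∈ [m], then the pair (ũ, ṽ) obtained from (u, v) by replacing (u_i, v_i) with (u_i + v_i, 0) satisfies g(ũ, ṽ) < g(u, v); in particular, (u, v) is not a global minimizer of g. -/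
/-- For `λ > 0`, if `uᵢ > 0` and `vᵢ > 0` for some `i`, then replacing
`(uᵢ, vᵢ)` by `(uᵢ + vᵢ, 0)` strictly decreases
`g(u,v) = ∑(uᵢ+vᵢ−1)² + λ(∑(|uᵢ|+|vᵢ|) − √(∑(uᵢ²+vᵢ²)))`;
in particular `(u,v)` is not a global minimizer of `g`. -/
theorem merge_positive_improves (m : ℕ) (hm : 1 ≤ m) (lam : ℝ) (hlam : 0 < lam)
    (g : (Fin m → ℝ) → (Fin m → ℝ) → ℝ)
    (hg : ∀ u v, g u v = (∑ i, (u i + v i - 1) ^ 2)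
      + lam * ((∑ i, (|u i| + |v i|)) - Real.sqrt (∑ i, (u i ^ 2 + v i ^ 2))))
    (u v : Fin m → ℝ) (i : Fin m) (hu : 0 < u i) (hv : 0 < v i) :
    g (Function.update u i (u i + v i)) (Function.update v i 0) < g u v ∧
    ¬ (∀ u' v' : Fin m → ℝ, g u v ≤ g u' v') := by
  set u' := Function.update u i (u i + v i) with hu'
  set v' := Function.update v i 0 with hv'
  have h1 : (∑ j, (u' j + v' j - 1) ^ 2) = ∑ j, (u j + v j - 1) ^ 2 := by
    apply Finset.sum_congr rfl
    intro j _
    by_cases hj : j = i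
    · subst hj; simp [hu', hv']
    · simp [hu', hv', Function.update_of_ne hj]
  have h2 : (∑ j, (|u' j| + |v' j|)) = ∑ j, (|u j| + |v j|) := by
    apply Finset.sum_congr rfl
    intro j _
    by_cases hj : j = i
    · subst hj
      simp [hu', hv', abs_of_pos hu, abs_of_pos hv, abs_of_pos (add_pos hu hv)]
    · simp [hu', hv', Function.update_of_ne hj]
  have h3 : (∑ j, (u' j ^ 2 + v' j ^ 2)) = (∑ j, (u j ^ 2 + v j ^ 2)) + 2 * u i * v i := by
    rw [Finset.sum_eq_sum_sdiff_singleton_add (Finset.mem_univ i) (fun j => u' j ^ 2 + v' j ^ 2),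
        Finset.sum_eq_sum_sdiff_singleton_add (Finset.mem_univ i) (fun j => u j ^ 2 + v j ^ 2)]
    have : ∑ j ∈ Finset.univ \ {i}, (u' j ^ 2 + v' j ^ 2)
        = ∑ j ∈ Finset.univ \ {i}, (u j ^ 2 + v j ^ 2) := by
      apply Finset.sum_congr rfl
      intro j hj
      rw [Finset.mem_sdiff, Finset.mem_singleton] at hj
      simp [hu', hv', Function.update_of_ne hj.2]
    rw [this]
    simp [hu', hv']
    ring
  have hnn : 0 ≤ ∑ j, (u j ^ 2 + v j ^ 2) :=
    Finset.sum_nonneg fun j _ => add_nonneg (sq_nonneg _) (sq_nonneg _)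
  have hsqrt : Real.sqrt (∑ j, (u j ^ 2 + v j ^ 2)) < Real.sqrt (∑ j, (u' j ^ 2 + v' j ^ 2)) := by
    rw [h3]
    apply Real.sqrt_lt_sqrt hnn
    nlinarith [mul_pos hu hv]
  have hlt : g u' v' < g u v := by
    rw [hg, hg, h1, h2]
    have : lam * ((∑ j, (|u j| + |v j|)) - Real.sqrt (∑ j, (u' j ^ 2 + v' j ^ 2)))
        < lam * ((∑ j, (|u j| + |v j|)) - Real.sqrt (∑ j, (u j ^ 2 + v j ^ 2))) := by
      apply mul_lt_mul_of_pos_left _ hlam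
      linarith
    linarith
  exact ⟨hlt, fun h => absurd (h u' v') (not_le.mpr hlt)⟩
end
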